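/- arXiv:math/9910145 — 7 statements merged into one kernel-verified Lean document; each statement's English description precedes it below -/
import Mathlib

section
/- There exist a constant C > 0 and infinitely many positive integers N such that ord(A,N) ≤ C·log N. -/
open Matrix

/-- `matOrd A N` is the order of `A` modulo `N`: the least `k ≥ 1`
with `A^k ≡ I (mod N)`. -/
noncomputable def matOrd (A : Matrix (Fin 2) (Fin 2) ℤ) (N : ℕ) : ℕ :=
  sInf {k | 0 < k ∧ ∀ i j, (N : ℤ) ∣ (A ^ k - 1) i j}

/-- The Chebyshev-like sequence attached to `t`. -/
def pseq (t : ℤ) : ℕ → ℤ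
  | 0 => 0
  | 1 => 1
  | (n + 2) => t * pseq t (n + 1) - pseq t n

lemma sq_eq (A : Matrix (Fin 2) (Fin 2) ℤ) (hA : A.det = 1) :
    A ^ 2 = A.trace • A - 1 := by
  have hd := A.det_fin_two
  rw [hA] at hd
  have ht := Matrix.trace_fin_two A
  ext i j
  fin_cases i <;> fin_cases j <;>
    simp only [pow_two, Matrix.mul_apply, Fin.sum_univ_two, Matrix.sub_apply,
      Matrix.smul_apply, Matrix.one_apply, smul_eq_mul, ht] <;>
    norm_num <;> linarith [hd]

lemma pow_eq (A : Matrix (Fin 2) (Fin 2) ℤ) (hA : A.det = 1) (n : ℕ) :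
    A ^ (n + 1) = pseq A.trace (n + 1) • A - pseq A.trace n • 1 := by
  induction n with
  | zero => simp [pseq]
  | succ n ih =>
    have h2 := sq_eq A hA
    have hmul : A * A = A.trace • A - 1 := by rw [← pow_two, h2]
    rw [pow_succ, ih]
    rw [show pseq A.trace (n + 2) =
      A.trace * pseq A.trace (n + 1) - pseq A.trace n from rfl]
    rw [sub_mul, smul_mul_assoc, smul_mul_assoc, one_mul, hmul]
    ext i j
    simp only [Matrix.sub_apply, Matrix.smul_apply, Matrix.one_apply,
      smul_eq_mul]
    ring

lemma det_identity (A : Matrix (Fin 2) (Fin 2) ℤ) (hA : A.det = 1) (n : ℕ) :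
    pseq A.trace (n + 1) ^ 2 - A.trace * pseq A.trace (n + 1) * pseq A.trace n
      + pseq A.trace n ^ 2 = 1 := by
  have h1 : (A ^ (n + 1)).det = 1 := by rw [Matrix.det_pow, hA, one_pow]
  rw [pow_eq A hA n, Matrix.det_fin_two] at h1
  set p := pseq A.trace (n + 1)
  set q := pseq A.trace n
  simp only [Matrix.sub_apply, Matrix.smul_apply, Matrix.one_apply,
    smul_eq_mul, if_pos rfl] at h1
  norm_num at h1
  have hd := A.det_fin_two
  rw [hA] at hd
  have ht := Matrix.trace_fin_two A
  linear_combination h1 + p ^ 2 * hd - p * q * ht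

lemma dvd_pow_sub_one (A : Matrix (Fin 2) (Fin 2) ℤ) (hA : A.det = 1) (n : ℕ)
    (i j : Fin 2) :
    pseq A.trace (n + 1) ∣ (A ^ (2 * (n + 1)) - 1) i j := by
  set p := pseq A.trace (n + 1) with hp
  set q := pseq A.trace n with hq
  have hsq : p ∣ q ^ 2 - 1 := by
    refine ⟨A.trace * q - p, ?_⟩
    have h := det_identity A hA n
    rw [← hp, ← hq] at h
    linear_combination h
  have hpow : A ^ (2 * (n + 1)) - 1
      = p • (p • (A * A) - (2 * q) • A) + (q ^ 2 - 1) • 1 := by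
    have h := pow_eq A hA n
    rw [← hp, ← hq] at h
    rw [two_mul, pow_add, h]
    ext i j
    fin_cases i <;> fin_cases j <;>
      simp only [Matrix.mul_apply, Matrix.sub_apply, Matrix.add_apply,
        Matrix.smul_apply, Matrix.one_apply, Fin.sum_univ_two, smul_eq_mul] <;>
      norm_num <;> ring
  rw [hpow]
  obtain ⟨c, hc⟩ := hsq
  simp only [Matrix.add_apply, Matrix.smul_apply, hc, smul_eq_mul]
  exact dvd_add ⟨_, rfl⟩ ⟨c * (1 : Matrix (Fin 2) (Fin 2) ℤ) i j, by ring⟩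

lemma one_le_two_pow' (n : ℕ) : (1 : ℤ) ≤ 2 ^ n := by
  exact_mod_cast Nat.one_le_two_pow (n := n)

lemma pseq_growth (t : ℤ) (ht : 3 ≤ |t|) (n : ℕ) :
    |pseq t n| ≤ |pseq t (n + 1)| ∧ (2 : ℤ) ^ n ≤ |pseq t (n + 1)| := by
  induction n with
  | zero => simp [pseq]
  | succ n ih =>
    obtain ⟨h1, h2⟩ := ih
    have key : 2 * |pseq t (n + 1)| ≤ |pseq t (n + 2)| := by
      have heq : |pseq t (n + 2)| = |t * pseq t (n + 1) - pseq t n| := rfl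
      have habs : |t * pseq t (n + 1)| - |pseq t n|
          ≤ |t * pseq t (n + 1) - pseq t n| := abs_sub_abs_le_abs_sub _ _
      rw [abs_mul] at habs
      have h3 : 3 * |pseq t (n + 1)| ≤ |t| * |pseq t (n + 1)| :=
        mul_le_mul_of_nonneg_right ht (abs_nonneg _)
      rw [heq]
      linarith
    have hpos : (1 : ℤ) ≤ |pseq t (n + 1)| := le_trans (one_le_two_pow' n) h2
    constructor
    · linarith
    · calc (2 : ℤ) ^ (n + 1) = 2 * 2 ^ n := by ring
        _ ≤ 2 * |pseq t (n + 1)| := by linarith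
        _ ≤ |pseq t (n + 2)| := key

/-- There exist `C > 0` and infinitely many positive integers `N` with
`ord(A,N) ≤ C log N`. -/
theorem order_small_infinitely_often
    (A : Matrix (Fin 2) (Fin 2) ℤ) (hA : A.det = 1) (htr : 2 < |A.trace|) :
    ∃ C : ℝ, 0 < C ∧
      {N : ℕ | 0 < N ∧ (matOrd A N : ℝ) ≤ C * Real.log N}.Infinite := by
  set t := A.trace with htt
  have ht3 : 3 ≤ |t| := htr
  set f : ℕ → ℕ := fun n => (pseq t (n + 2)).natAbs with hf
  have hlow : ∀ n, (2 : ℤ) ^ (n + 1) ≤ (f n : ℤ) := by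
    intro n
    have h := (pseq_growth t ht3 (n + 1)).2
    rwa [Int.abs_eq_natAbs] at h
  have hfpos : ∀ n, 0 < f n := by
    intro n
    have h2 : (0 : ℤ) < 2 ^ (n + 1) := by positivity
    exact_mod_cast lt_of_lt_of_le h2 (hlow n)
  have hmono : StrictMono f := by
    apply strictMono_nat_of_lt_succ
    intro n
    have h1 := (pseq_growth t ht3 (n + 1)).2
    have key : 2 * |pseq t (n + 2)| ≤ |pseq t (n + 3)| := by
      have habs : |t * pseq t (n + 2)| - |pseq t (n + 1)|
          ≤ |t * pseq t (n + 2) - pseq t (n + 1)| := abs_sub_abs_le_abs_sub _ _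
      rw [abs_mul] at habs
      have h3 : 3 * |pseq t (n + 2)| ≤ |t| * |pseq t (n + 2)| :=
        mul_le_mul_of_nonneg_right ht3 (abs_nonneg _)
      have hle := (pseq_growth t ht3 (n + 1)).1
      show 2 * |pseq t (n + 2)| ≤ |t * pseq t (n + 2) - pseq t (n + 1)|
      linarith
    have hpos : (1 : ℤ) ≤ |pseq t (n + 2)| :=
      le_trans (one_le_two_pow' (n + 1)) h1
    have hlt : ((f n : ℤ)) < (f (n + 1) : ℤ) := by
      show ((pseq t (n + 2)).natAbs : ℤ) < ((pseq t (n + 3)).natAbs : ℤ)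
      rw [← Int.abs_eq_natAbs, ← Int.abs_eq_natAbs]
      linarith
    exact_mod_cast hlt
  have hord : ∀ n, matOrd A (f n) ≤ 2 * (n + 2) := by
    intro n
    apply Nat.sInf_le
    refine ⟨by positivity, ?_⟩
    intro i j
    have hdvd := dvd_pow_sub_one A hA (n + 1) i j
    have heq : ((f n : ℤ)) = |pseq t (n + 2)| := (Int.abs_eq_natAbs _).symm
    rw [heq, abs_dvd]
    exact hdvd
  refine ⟨4 / Real.log 2, by positivity, ?_⟩
  apply Set.infinite_of_injective_forall_mem (f := f) hmono.injective
  intro n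
  refine ⟨hfpos n, ?_⟩
  have hlog2 : (0 : ℝ) < Real.log 2 := Real.log_pos (by norm_num)
  have hNlog : Real.log ((2 : ℝ) ^ (n + 1)) ≤ Real.log (f n) := by
    apply Real.log_le_log (by positivity)
    exact_mod_cast hlow n
  rw [Real.log_pow] at hNlog
  push_cast at hNlog
  calc (matOrd A (f n) : ℝ) ≤ 2 * (n + 2) := by exact_mod_cast hord n
    _ ≤ 4 * ((n : ℝ) + 1) := by linarith
    _ = 4 / Real.log 2 * (((n : ℝ) + 1) * Real.log 2) := by
        field_simp
    _ ≤ 4 / Real.log 2 * Real.log (f n) := by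
        exact mul_le_mul_of_nonneg_left hNlog (by positivity)
end

section
/- Let N ≥ 1, let r = ord(A,N), let U be a unitary operator on H_N satisfying the Egorov property for A, and let ψ_1, …, ψ_N be an orthonormal basis of H_N consisting of eigenvectors of U. Then ∑_{i=1}^N |⟨T_N(n)ψ_i, ψ_i⟩|^4 ≤ (N / r^4) · ν(N,n), where ν(N,n) is the number of quadruples (i,j,k,l) with 1 ≤ i,j,k,l ≤ r such that n(A^i − A^j + A^k − A^l) ≡ 0 (mod N) (the row vector n times the matrix, each entry congruent to 0 mod N). -/
open Matrix

/-- The inner product on `H_N`: `⟨φ,ψ⟩ = (1/N) ∑_{Q mod N} φ(Q) conj(ψ(Q))`. -/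
noncomputable def innerH (N : ℕ) [NeZero N] (φ ψ : ZMod N → ℂ) : ℂ :=
  (N : ℂ)⁻¹ * ∑ Q : ZMod N, φ Q * starRingEnd ℂ (ψ Q)

/-- The translation operator `T_N(n)` on `H_N`:
`(T_N(n)ψ)(Q) = e^{iπ n₁ n₂ / N} e^{2πi n₂ Q / N} ψ(Q + n₁)`. -/
noncomputable def TN (N : ℕ) (n : Fin 2 → ℤ) (ψ : ZMod N → ℂ) : ZMod N → ℂ :=
  fun Q => Complex.exp (Real.pi * Complex.I * (n 0 : ℂ) * (n 1 : ℂ) / (N : ℂ)) *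
    Complex.exp (2 * Real.pi * Complex.I * (n 1 : ℂ) * (Q.val : ℂ) / (N : ℂ)) *
    ψ (Q + (n 0 : ZMod N))

/-- `nu A N n` is the number of quadruples `(i,j,k,l)` with
`1 ≤ i,j,k,l ≤ ord(A,N)` and `n (A^i - A^j + A^k - A^l) ≡ 0 (mod N)`. -/
noncomputable def nu (A : Matrix (Fin 2) (Fin 2) ℤ) (N : ℕ) (n : Fin 2 → ℤ) : ℕ :=
  {q : ℕ × ℕ × ℕ × ℕ |
    q.1 ∈ Finset.Icc 1 (matOrd A N) ∧ q.2.1 ∈ Finset.Icc 1 (matOrd A N) ∧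
    q.2.2.1 ∈ Finset.Icc 1 (matOrd A N) ∧ q.2.2.2 ∈ Finset.Icc 1 (matOrd A N) ∧
    ∀ m, (N : ℤ) ∣ Matrix.vecMul n (A ^ q.1 - A ^ q.2.1 + A ^ q.2.2.1 - A ^ q.2.2.2) m}.ncard

/-!
Averaging along the orbit: by the Egorov property and unitarity, `⟨T_N(n A^k) ψ_i, ψ_i⟩` does not
depend on `k`, so `r ⟨T_N(n) ψ_i, ψ_i⟩ = ⟨O ψ_i, ψ_i⟩` with `O = ∑_{k=1}^r T_N(n A^k)`. Two
applications of Cauchy–Schwarz give `r⁴ |⟨T_N(n) ψ_i, ψ_i⟩|⁴ ≤ ‖O* O ψ_i‖²`, and summing over the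
orthonormal basis turns the right-hand side into the trace of `(O* O)²`. Expanding, this is a sum of
`r⁴` traces of products of four translations. By the Weyl relation
`T_N(a) T_N(b) = e^{iπ (a₀b₁ - a₁b₀)/N} T_N(a + b)` each is a unimodular multiple of the trace of
`T_N(n (A^i - A^j + A^k - A^l))`, which has modulus `N` if that vector vanishes mod `N` and is `0`
otherwise.
-/

noncomputable def halfPhase (N : ℕ) (x : ℤ) : ℂ :=
  Complex.exp (Real.pi * Complex.I * x / N)

section

variable {N : ℕ}

lemma halfPhase_add (x y : ℤ) : halfPhase N x * halfPhase N y = halfPhase N (x + y) := by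
  rw [halfPhase, halfPhase, halfPhase, ← Complex.exp_add]
  push_cast
  ring_nf

lemma norm_halfPhase (x : ℤ) : ‖halfPhase N x‖ = 1 := by
  rw [halfPhase, show (Real.pi * Complex.I * x / N : ℂ) = ((Real.pi * x / N : ℝ) : ℂ) * Complex.I by
    push_cast; ring]
  exact Complex.norm_exp_ofReal_mul_I _

lemma TN_smul (m : Fin 2 → ℤ) (c : ℂ) (φ : ZMod N → ℂ) : TN N m (c • φ) = c • TN N m φ := by
  funext Q
  simp only [TN, Pi.smul_apply, smul_eq_mul]
  ring

end

section

variable {N : ℕ} [NeZero N]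

lemma halfPhase_two_mul (k : ℤ) :
    halfPhase N (2 * k) = ZMod.stdAddChar (k : ZMod N) := by
  rw [ZMod.stdAddChar_coe, halfPhase]
  push_cast
  ring_nf

lemma ZMod.norm_stdAddChar (j : ZMod N) : ‖ZMod.stdAddChar j‖ = 1 :=
  Circle.norm_coe _

lemma TN_apply (m : Fin 2 → ℤ) (φ : ZMod N → ℂ) (Q : ZMod N) :
    TN N m φ Q =
      halfPhase N (m 0 * m 1) * ZMod.stdAddChar ((m 1 : ZMod N) * Q) * φ (Q + m 0) := by
  have hQ : ((m 1 : ZMod N) * Q) = ((m 1 * Q.val : ℤ) : ZMod N) := by simp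
  rw [hQ, ZMod.stdAddChar_coe, TN, halfPhase]
  push_cast
  ring_nf

lemma TN_zero (φ : ZMod N → ℂ) : TN N 0 φ = φ := by
  funext Q
  simp [TN_apply, halfPhase]

lemma TN_TN (a b : Fin 2 → ℤ) (φ : ZMod N → ℂ) :
    TN N a (TN N b φ) = halfPhase N (a 0 * b 1 - a 1 * b 0) • TN N (a + b) φ := by
  funext Q
  have hχ : ZMod.stdAddChar ((b 1 : ZMod N) * (Q + (a 0 : ZMod N))) =
      ZMod.stdAddChar ((b 1 : ZMod N) * Q) * halfPhase N (2 * (b 1 * a 0)) := by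
    rw [mul_add, AddChar.map_add_eq_mul, halfPhase_two_mul]
    push_cast
    rfl
  have hχ' : ZMod.stdAddChar (((a 1 : ZMod N) + (b 1 : ZMod N)) * Q) =
      ZMod.stdAddChar ((a 1 : ZMod N) * Q) * ZMod.stdAddChar ((b 1 : ZMod N) * Q) := by
    rw [add_mul, AddChar.map_add_eq_mul]
  have hphase : halfPhase N (a 0 * a 1) * halfPhase N (b 0 * b 1) * halfPhase N (2 * (b 1 * a 0)) =
      halfPhase N (a 0 * b 1 - a 1 * b 0) * halfPhase N ((a 0 + b 0) * (a 1 + b 1)) := by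
    simp only [halfPhase_add]
    ring_nf
  simp only [TN_apply, Pi.smul_apply, Pi.add_apply, smul_eq_mul, hχ, Int.cast_add, hχ',
    ← add_assoc]
  linear_combination ZMod.stdAddChar ((a 1 : ZMod N) * Q) * ZMod.stdAddChar ((b 1 : ZMod N) * Q) *
    φ (Q + a 0 + b 0) * hphase

lemma innerH_sum_left {ι : Type*} (s : Finset ι) (f : ι → ZMod N → ℂ) (χ : ZMod N → ℂ) :
    innerH N (∑ k ∈ s, f k) χ = ∑ k ∈ s, innerH N (f k) χ := by
  simp only [innerH, Finset.sum_apply, Finset.sum_mul, ← Finset.mul_sum]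
  rw [Finset.sum_comm]

lemma innerH_sum_right {ι : Type*} (s : Finset ι) (φ : ZMod N → ℂ) (f : ι → ZMod N → ℂ) :
    innerH N φ (∑ k ∈ s, f k) = ∑ k ∈ s, innerH N φ (f k) := by
  simp only [innerH, Finset.sum_apply, map_sum, Finset.mul_sum]
  rw [Finset.sum_comm]

lemma innerH_smul_left (c : ℂ) (φ χ : ZMod N → ℂ) :
    innerH N (c • φ) χ = c * innerH N φ χ := by
  simp only [innerH, Pi.smul_apply, smul_eq_mul, Finset.mul_sum]
  exact Finset.sum_congr rfl fun _ _ => by ring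

lemma innerH_smul_right (c : ℂ) (φ χ : ZMod N → ℂ) :
    innerH N φ (c • χ) = starRingEnd ℂ c * innerH N φ χ := by
  simp only [innerH, Pi.smul_apply, smul_eq_mul, map_mul, Finset.mul_sum]
  exact Finset.sum_congr rfl fun _ _ => by ring

lemma innerH_self (φ : ZMod N → ℂ) :
    innerH N φ φ = (((N : ℝ)⁻¹ * ∑ Q, ‖φ Q‖ ^ 2 : ℝ) : ℂ) := by
  simp only [innerH, Complex.mul_conj', Complex.ofReal_mul, Complex.ofReal_inv,
    Complex.ofReal_natCast, Complex.ofReal_sum, Complex.ofReal_pow]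

lemma norm_innerH_sq_le (φ χ : ZMod N → ℂ) :
    ‖innerH N φ χ‖ ^ 2 ≤ (innerH N φ φ).re * (innerH N χ χ).re := by
  rw [innerH_self, innerH_self, Complex.ofReal_re, Complex.ofReal_re, innerH, norm_mul,
    norm_inv, Complex.norm_natCast]
  have hsum : ‖∑ Q, φ Q * starRingEnd ℂ (χ Q)‖ ≤ ∑ Q, ‖φ Q‖ * ‖χ Q‖ :=
    (norm_sum_le _ _).trans_eq (by simp)
  calc ((N : ℝ)⁻¹ * ‖∑ Q, φ Q * starRingEnd ℂ (χ Q)‖) ^ 2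
      ≤ ((N : ℝ)⁻¹ * ∑ Q, ‖φ Q‖ * ‖χ Q‖) ^ 2 := by gcongr
    _ ≤ (N : ℝ)⁻¹ ^ 2 * ((∑ Q, ‖φ Q‖ ^ 2) * ∑ Q, ‖χ Q‖ ^ 2) := by
      rw [mul_pow]; gcongr; exact Finset.sum_mul_sq_le_sq_mul_sq _ _ _
    _ = _ := by ring

lemma norm_innerH_pow_four_le {φ Φ Ξ : ZMod N → ℂ} (hφ : innerH N φ φ = 1)
    (hΦ : innerH N Φ Φ = innerH N Ξ φ) : ‖innerH N Φ φ‖ ^ 4 ≤ (innerH N Ξ Ξ).re := by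
  have hΦφ : ‖innerH N Φ φ‖ ^ 2 ≤ ‖innerH N Ξ φ‖ :=
    calc ‖innerH N Φ φ‖ ^ 2 ≤ (innerH N Φ Φ).re * (innerH N φ φ).re := norm_innerH_sq_le Φ φ
      _ = (innerH N Ξ φ).re := by rw [hφ, hΦ, Complex.one_re, mul_one]
      _ ≤ ‖innerH N Ξ φ‖ := Complex.re_le_norm _
  have hΞφ := norm_innerH_sq_le Ξ φ
  rw [hφ, Complex.one_re, mul_one] at hΞφ
  calc ‖innerH N Φ φ‖ ^ 4 = (‖innerH N Φ φ‖ ^ 2) ^ 2 := by ring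
    _ ≤ ‖innerH N Ξ φ‖ ^ 2 := by gcongr
    _ ≤ (innerH N Ξ Ξ).re := hΞφ

lemma innerH_TN_TN_self (m : Fin 2 → ℤ) (φ χ : ZMod N → ℂ) :
    innerH N (TN N m φ) (TN N m χ) = innerH N φ χ := by
  simp only [innerH, TN_apply, map_mul]
  rw [← Equiv.sum_comp (Equiv.addRight (m 0 : ZMod N)) (fun Q => φ Q * starRingEnd ℂ (χ Q))]
  refine congrArg _ (Finset.sum_congr rfl fun Q _ => ?_)
  have hunit : ∀ z : ℂ, ‖z‖ = 1 → z * starRingEnd ℂ z = 1 := fun z hz => by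
    rw [Complex.mul_conj', hz, Complex.ofReal_one, one_pow]
  have h₁ := hunit _ (norm_halfPhase (N := N) (m 0 * m 1))
  have h₂ := hunit _ (ZMod.norm_stdAddChar ((m 1 : ZMod N) * Q))
  simp only [Equiv.coe_addRight]
  linear_combination φ (Q + m 0) * starRingEnd ℂ (χ (Q + m 0)) *
    (ZMod.stdAddChar ((m 1 : ZMod N) * Q) * starRingEnd ℂ (ZMod.stdAddChar ((m 1 : ZMod N) * Q)) *
      h₁ + h₂)

lemma innerH_TN_right (m : Fin 2 → ℤ) (φ χ : ZMod N → ℂ) :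
    innerH N φ (TN N m χ) = innerH N (TN N (-m) φ) χ := by
  have hφ : TN N m (TN N (-m) φ) = φ := by
    rw [TN_TN, add_neg_cancel, TN_zero,
      show m 0 * (-m) 1 - m 1 * (-m) 0 = 0 by simp only [Pi.neg_apply]; ring]
    simp [halfPhase]
  conv_lhs => rw [← hφ]
  exact innerH_TN_TN_self m _ _

end

section

variable {N : ℕ} [NeZero N] {ψ : Fin N → ZMod N → ℂ}

lemma sum_mul_conj_of_orthonormal (hON : ∀ i j, innerH N (ψ i) (ψ j) = if i = j then 1 else 0)
    (P Q : ZMod N) : ∑ i, ψ i P * starRingEnd ℂ (ψ i Q) = if P = Q then (N : ℂ) else 0 := by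
  have hN : (N : ℂ) ≠ 0 := Nat.cast_ne_zero.2 (NeZero.ne N)
  let M : Matrix (Fin N) (ZMod N) ℂ := Matrix.of ψ
  have hMM : M * ((N : ℂ)⁻¹ • Mᴴ) = 1 := by
    ext i j
    simp only [Matrix.mul_apply, Matrix.smul_apply, Matrix.conjTranspose_apply, smul_eq_mul,
      Matrix.one_apply, M, Matrix.of_apply, ← hON, innerH, Finset.mul_sum]
    exact Finset.sum_congr rfl fun _ _ => by rw [RCLike.star_def]; ring
  have hMM' := congrFun (congrFun
    ((Matrix.mul_eq_one_comm_of_card_eq _ _ _ (by simp)).1 hMM) Q) P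
  simp only [Matrix.mul_apply, Matrix.smul_apply, Matrix.conjTranspose_apply, smul_eq_mul,
    Matrix.one_apply, M, Matrix.of_apply, mul_assoc, ← Finset.mul_sum, RCLike.star_def] at hMM'
  calc ∑ i, ψ i P * starRingEnd ℂ (ψ i Q)
      = N * ((N : ℂ)⁻¹ * ∑ i, starRingEnd ℂ (ψ i Q) * ψ i P) := by
        rw [mul_inv_cancel_left₀ hN]; exact Finset.sum_congr rfl fun _ _ => mul_comm _ _
    _ = if P = Q then (N : ℂ) else 0 := by
        rw [hMM']; by_cases h : P = Q
        · simp [h]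
        · simp [h, Ne.symm h]

lemma sum_innerH_TN_self (hON : ∀ i j, innerH N (ψ i) (ψ j) = if i = j then 1 else 0)
    (m : Fin 2 → ℤ) :
    ∑ i, innerH N (TN N m (ψ i)) (ψ i) =
      if ∀ x, (N : ℤ) ∣ m x then N * halfPhase N (m 0 * m 1) else 0 := by
  classical
  have hN : (N : ℂ) ≠ 0 := Nat.cast_ne_zero.2 (NeZero.ne N)
  have hshift : ∀ Q : ZMod N, Q + m 0 = Q ↔ (m 0 : ZMod N) = 0 := fun Q => add_eq_left
  simp only [innerH, TN_apply, ← Finset.mul_sum]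
  rw [Finset.sum_comm]
  simp only [mul_assoc, ← Finset.mul_sum, sum_mul_conj_of_orthonormal hON, hshift]
  simp only [Fin.forall_fin_two, ← ZMod.intCast_zmod_eq_zero_iff_dvd]
  by_cases h0 : (m 0 : ZMod N) = 0
  · simp only [h0, if_true, true_and, ← Finset.sum_mul]
    simp only [mul_comm (m 1 : ZMod N), AddChar.sum_mulShift _ (ZMod.isPrimitive_stdAddChar N),
      ZMod.card]
    split_ifs
    · field_simp
    · simp
  · simp [h0]

lemma norm_sum_innerH_TN_TN_le (hON : ∀ i j, innerH N (ψ i) (ψ j) = if i = j then 1 else 0)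
    (a b c d : Fin 2 → ℤ) :
    ‖∑ i, innerH N (TN N a (TN N b (ψ i))) (TN N c (TN N d (ψ i)))‖ ≤
      if ∀ x, (N : ℤ) ∣ (a + b - (c + d)) x then (N : ℝ) else 0 := by
  simp only [TN_TN, innerH_smul_left, innerH_smul_right]
  simp only [innerH_TN_right, TN_TN, innerH_smul_left, neg_add_eq_sub, ← Finset.mul_sum,
    sum_innerH_TN_self hON, norm_mul, norm_halfPhase, Complex.norm_conj, one_mul]
  split_ifs <;> simp [norm_halfPhase]

end

noncomputable def weylSum (N : ℕ) {ι : Type*} (s : Finset ι) (m : ι → Fin 2 → ℤ)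
    (φ : ZMod N → ℂ) : ZMod N → ℂ :=
  ∑ k ∈ s, TN N (m k) φ

/-- `O* O φ` for `O = ∑_{k ∈ s} T_N(m k)`, since `T_N(m)* = T_N(-m)`. -/
noncomputable def weylGram (N : ℕ) {ι : Type*} (s : Finset ι) (m : ι → Fin 2 → ℤ)
    (φ : ZMod N → ℂ) : ZMod N → ℂ :=
  ∑ k ∈ s, ∑ l ∈ s, TN N (-m l) (TN N (m k) φ)

section

variable {N : ℕ} [NeZero N] {ι : Type*} (s : Finset ι) (m : ι → Fin 2 → ℤ)

lemma innerH_weylSum_self (φ : ZMod N → ℂ) :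
    innerH N (weylSum N s m φ) (weylSum N s m φ) = innerH N (weylGram N s m φ) φ := by
  simp only [weylSum, weylGram, innerH_sum_left]
  simp only [innerH_sum_right, innerH_TN_right]

lemma re_sum_innerH_weylGram_le {ψ : Fin N → ZMod N → ℂ}
    (hON : ∀ i j, innerH N (ψ i) (ψ j) = if i = j then 1 else 0) :
    ∑ i, (innerH N (weylGram N s m (ψ i)) (weylGram N s m (ψ i))).re ≤
      N * ∑ i ∈ s, ∑ j ∈ s, ∑ k ∈ s, ∑ l ∈ s,
        if ∀ x, (N : ℤ) ∣ (m i - m j + m k - m l) x then (1 : ℝ) else 0 := by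
  rw [← Complex.re_sum]
  refine (Complex.re_le_norm _).trans ?_
  simp only [weylGram, innerH_sum_left, innerH_sum_right,
    Finset.sum_comm (s := (Finset.univ : Finset (Fin N)))]
  simp only [Finset.mul_sum, mul_ite, mul_one, mul_zero]
  refine (norm_sum_le _ _).trans (Finset.sum_le_sum fun i _ => ?_)
  refine (norm_sum_le _ _).trans (Finset.sum_le_sum fun j _ => ?_)
  -- matching the order of indices in the count needs one swap and a change of sign
  rw [Finset.sum_comm]
  refine (norm_sum_le _ _).trans (Finset.sum_le_sum fun k _ => ?_)
  refine (norm_sum_le _ _).trans (Finset.sum_le_sum fun l _ => ?_)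
  refine (norm_sum_innerH_TN_TN_le hON _ _ _ _).trans_eq ?_
  refine if_congr (forall_congr' fun x => ?_) rfl rfl
  rw [← dvd_neg]
  simp only [Pi.add_apply, Pi.sub_apply, Pi.neg_apply]
  ring_nf

end

lemma innerH_TN_vecMul_pow_of_egorov {N : ℕ} [NeZero N] {A : Matrix (Fin 2) (Fin 2) ℤ}
    {U : (ZMod N → ℂ) → ZMod N → ℂ} (hUnitary : ∀ φ χ, innerH N (U φ) (U χ) = innerH N φ χ)
    (hEgorov : ∀ m φ, TN N m (U φ) = U (TN N (vecMul m A) φ))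
    {φ : ZMod N → ℂ} (hφ : innerH N φ φ = 1) {c : ℂ} (hc : U φ = c • φ) (n : Fin 2 → ℤ) (k : ℕ) :
    innerH N (TN N (vecMul n (A ^ k)) φ) φ = innerH N (TN N n φ) φ := by
  have hc1 : starRingEnd ℂ c * c = 1 := by
    simpa [hc, innerH_smul_left, innerH_smul_right, hφ] using hUnitary φ φ
  have hstep : ∀ m, innerH N (TN N (vecMul m A) φ) φ = innerH N (TN N m φ) φ := fun m => by
    rw [← hUnitary, ← hEgorov, hc, TN_smul, innerH_smul_left, innerH_smul_right, mul_left_comm,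
      ← mul_assoc, hc1, one_mul]
  induction k with
  | zero => rw [pow_zero, vecMul_one]
  | succ k ih => rw [pow_succ, ← vecMul_vecMul, hstep, ih]

lemma pow_four_mul_norm_innerH_TN_le_of_egorov {N : ℕ} [NeZero N]
    {A : Matrix (Fin 2) (Fin 2) ℤ} {U : (ZMod N → ℂ) → ZMod N → ℂ}
    (hUnitary : ∀ φ χ, innerH N (U φ) (U χ) = innerH N φ χ)
    (hEgorov : ∀ m φ, TN N m (U φ) = U (TN N (vecMul m A) φ))
    {φ : ZMod N → ℂ} (hφ : innerH N φ φ = 1) {c : ℂ} (hc : U φ = c • φ) (n : Fin 2 → ℤ)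
    (s : Finset ℕ) :
    (s.card : ℝ) ^ 4 * ‖innerH N (TN N n φ) φ‖ ^ 4 ≤
      (innerH N (weylGram N s (fun k => vecMul n (A ^ k)) φ)
        (weylGram N s (fun k => vecMul n (A ^ k)) φ)).re := by
  have hsum : innerH N (weylSum N s (fun k => vecMul n (A ^ k)) φ) φ =
      s.card * innerH N (TN N n φ) φ := by
    simp only [weylSum, innerH_sum_left,
      innerH_TN_vecMul_pow_of_egorov hUnitary hEgorov hφ hc, Finset.sum_const, nsmul_eq_mul]
  have h4 := norm_innerH_pow_four_le hφ (innerH_weylSum_self s (fun k => vecMul n (A ^ k)) φ)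
  rwa [hsum, norm_mul, Complex.norm_natCast, mul_pow] at h4

lemma nu_eq_sum (A : Matrix (Fin 2) (Fin 2) ℤ) (N : ℕ) (n : Fin 2 → ℤ) :
    (nu A N n : ℝ) = ∑ i ∈ Finset.Icc 1 (matOrd A N), ∑ j ∈ Finset.Icc 1 (matOrd A N),
      ∑ k ∈ Finset.Icc 1 (matOrd A N), ∑ l ∈ Finset.Icc 1 (matOrd A N),
        if ∀ x, (N : ℤ) ∣ (vecMul n (A ^ i) - vecMul n (A ^ j) + vecMul n (A ^ k) -
          vecMul n (A ^ l)) x then (1 : ℝ) else 0 := by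
  classical
  set I := Finset.Icc 1 (matOrd A N)
  have hset : {q : ℕ × ℕ × ℕ × ℕ | q.1 ∈ I ∧ q.2.1 ∈ I ∧ q.2.2.1 ∈ I ∧ q.2.2.2 ∈ I ∧
      ∀ x, (N : ℤ) ∣ vecMul n (A ^ q.1 - A ^ q.2.1 + A ^ q.2.2.1 - A ^ q.2.2.2) x} =
      ((I ×ˢ I ×ˢ I ×ˢ I).filter fun q => ∀ x, (N : ℤ) ∣ (vecMul n (A ^ q.1) -
        vecMul n (A ^ q.2.1) + vecMul n (A ^ q.2.2.1) - vecMul n (A ^ q.2.2.2)) x : Finset _) := by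
    ext q
    simp only [Set.mem_ofPred_eq, Finset.coe_filter, Finset.mem_product, vecMul_sub, vecMul_add,
      and_assoc]
  rw [nu, hset, Set.ncard_coe_finset, Finset.card_filter]
  push_cast
  simp only [Finset.sum_product]

lemma matOrd_pos {A : Matrix (Fin 2) (Fin 2) ℤ} {N : ℕ} [NeZero N]
    (hA : IsUnit (A.det : ZMod N)) : 0 < matOrd A N := by
  obtain ⟨u, hu⟩ := (Matrix.isUnit_iff_isUnit_det ((Int.castRingHom (ZMod N)).mapMatrix A)).2
    (by rwa [← RingHom.map_det])
  have hk : (Int.castRingHom (ZMod N)).mapMatrix (A ^ orderOf u - 1) = 0 := by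
    rw [map_sub, map_pow, ← hu, ← Units.val_pow_eq_pow_val, pow_orderOf_eq_one, Units.val_one,
      map_one, sub_self]
  refine (Nat.sInf_mem (s := {k | 0 < k ∧ ∀ i j, (N : ℤ) ∣ (A ^ k - 1) i j})
    ⟨orderOf u, orderOf_pos u, fun i j => ?_⟩).1
  rw [← ZMod.intCast_zmod_eq_zero_iff_dvd]
  exact congrFun (congrFun hk i) j

theorem fourth_moment_basic_bound_general
    (A : Matrix (Fin 2) (Fin 2) ℤ) (hA : A.det = 1)
    (N : ℕ) [NeZero N] (n : Fin 2 → ℤ)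
    (U : (ZMod N → ℂ) ≃ₗ[ℂ] (ZMod N → ℂ))
    (hUnitary : ∀ φ ψ : ZMod N → ℂ, innerH N (U φ) (U ψ) = innerH N φ ψ)
    (hEgorov : ∀ (m : Fin 2 → ℤ) (ψ : ZMod N → ℂ),
      TN N m (U ψ) = U (TN N (Matrix.vecMul m A) ψ))
    (ψ : Fin N → ZMod N → ℂ)
    (hON : ∀ i j, innerH N (ψ i) (ψ j) = if i = j then 1 else 0)
    (hEig : ∀ i, ∃ c : ℂ, U (ψ i) = c • ψ i) :
    ∑ i, ‖innerH N (TN N n (ψ i)) (ψ i)‖ ^ 4 ≤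
      (N : ℝ) / (matOrd A N : ℝ) ^ 4 * (nu A N n : ℝ) := by
  set r := matOrd A N
  have hr : (0 : ℝ) < r := Nat.cast_pos.2 (matOrd_pos (by simp [hA]))
  have hkey : ∀ i, (r : ℝ) ^ 4 * ‖innerH N (TN N n (ψ i)) (ψ i)‖ ^ 4 ≤
      (innerH N (weylGram N (Finset.Icc 1 r) (fun k => vecMul n (A ^ k)) (ψ i))
        (weylGram N (Finset.Icc 1 r) (fun k => vecMul n (A ^ k)) (ψ i))).re := fun i => by
    obtain ⟨c, hc⟩ := hEig i
    simpa using pow_four_mul_norm_innerH_TN_le_of_egorov hUnitary hEgorov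
      (by rw [hON, if_pos rfl]) hc n (Finset.Icc 1 r)
  calc ∑ i, ‖innerH N (TN N n (ψ i)) (ψ i)‖ ^ 4
      = (r ^ 4 : ℝ)⁻¹ * ∑ i, (r : ℝ) ^ 4 * ‖innerH N (TN N n (ψ i)) (ψ i)‖ ^ 4 := by
        rw [← Finset.mul_sum, inv_mul_cancel_left₀ (pow_ne_zero 4 hr.ne')]
    _ ≤ (r ^ 4 : ℝ)⁻¹ * (N * nu A N n) := by
        gcongr
        refine (Finset.sum_le_sum fun i _ => hkey i).trans ?_
        rw [nu_eq_sum]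
        exact re_sum_innerH_weylGram_le _ _ hON
    _ = N / r ^ 4 * nu A N n := by ring

/-- Basic fourth-moment bound: for an orthonormal basis of eigenvectors of a
unitary `U` satisfying the Egorov property for `A`,
`∑ |⟨T_N(n)ψ_i, ψ_i⟩|⁴ ≤ (N / ord(A,N)⁴) · ν(N,n)`. -/
theorem fourth_moment_basic_bound
    (A : Matrix (Fin 2) (Fin 2) ℤ) (hA : A.det = 1) (htr : 2 < |A.trace|)
    (N : ℕ) [NeZero N] (n : Fin 2 → ℤ)
    (U : (ZMod N → ℂ) ≃ₗ[ℂ] (ZMod N → ℂ))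
    (hUnitary : ∀ φ ψ : ZMod N → ℂ, innerH N (U φ) (U ψ) = innerH N φ ψ)
    (hEgorov : ∀ (m : Fin 2 → ℤ) (ψ : ZMod N → ℂ),
      TN N m (U ψ) = U (TN N (Matrix.vecMul m A) ψ))
    (ψ : Fin N → ZMod N → ℂ)
    (hON : ∀ i j, innerH N (ψ i) (ψ j) = if i = j then 1 else 0)
    (hEig : ∀ i, ∃ c : ℂ, U (ψ i) = c • ψ i) :
    ∑ i, ‖innerH N (TN N n (ψ i)) (ψ i)‖ ^ 4 ≤
      (N : ℝ) / (matOrd A N : ℝ) ^ 4 * (nu A N n : ℝ) :=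
  fourth_moment_basic_bound_general A hA N n U hUnitary hEgorov ψ hON hEig
end

section
/- Let p be a prime such that the row vectors n and nA are linearly independent modulo p and such that tr(A)² − 4 ≢ 0 (mod p) (so the two eigenvalues of A are distinct modulo p). Then the number of quadruples (i,j,k,l) with 1 ≤ i,j,k,l ≤ ord(A,p) satisfying n(A^i − A^j + A^k − A^l) ≡ 0 (mod p) is at most 3·ord(A,p)². -/
open Matrix

open Polynomial

def uvp {R : Type*} [CommRing R] (s : R) : ℕ → R × R
  | 0 => (0, 1)
  | k+1 => (s * (uvp s k).1 + (uvp s k).2, -(uvp s k).1)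

lemma pow_uvp {R M : Type*} [CommRing R] [Ring M] [Algebra R M] (s : R) (x : M)
    (hx : x ^ 2 = s • x - 1) : ∀ k, x ^ k = (uvp s k).1 • x + (uvp s k).2 • 1 := by
  intro k
  induction k with
  | zero => simp [uvp]
  | succ k ih =>
    rw [pow_succ, ih, add_mul, smul_mul_assoc, smul_mul_assoc, one_mul, ← sq, hx]
    show _ = (s * (uvp s k).1 + (uvp s k).2) • x + (-(uvp s k).1) • (1 : M)
    module

lemma sq_fin_two {R : Type*} [CommRing R] (M : Matrix (Fin 2) (Fin 2) R) :
    M ^ 2 = M.trace • M - M.det • 1 := by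
  ext i j
  fin_cases i <;> fin_cases j <;>
    simp [pow_two, Matrix.mul_apply, Matrix.trace, Matrix.det_fin_two, Fin.sum_univ_two,
      Matrix.one_apply, Matrix.diag] <;> ring

lemma quad_cases {F : Type*} [Field F] {x y z w : F} (hx : x ≠ 0) (hy : y ≠ 0) (hz : z ≠ 0)
    (hw : w ≠ 0) (E1 : x + z = y + w) (E2 : x⁻¹ + z⁻¹ = y⁻¹ + w⁻¹) :
    (y = x ∧ w = z) ∨ (y = z ∧ w = x) ∨ (z = -x ∧ w = -y) := by
  have hxX := mul_inv_cancel₀ hx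
  have hyY := mul_inv_cancel₀ hy
  have hzZ := mul_inv_cancel₀ hz
  have hwW := mul_inv_cancel₀ hw
  have hE2'' : (x + z) * (y * w) = (y + w) * (x * z) := by
    linear_combination (x * z * y * w) * E2 - (z * y * w) * hxX - (x * y * w) * hzZ
      + (x * z * w) * hyY + (x * z * y) * hwW
  by_cases hxz0 : x + z = 0
  · right; right
    constructor
    · linear_combination hxz0
    · have hyw : y + w = 0 := by rw [← E1]; exact hxz0
      linear_combination hyw
  · have hywxz : y * w = x * z := by
      rw [E1] at hE2''
      exact mul_left_cancel₀ (by rwa [← E1]) hE2''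
    have hfac : (y - x) * (y - z) = 0 := by
      linear_combination (-y) * E1 - hywxz
    rcases mul_eq_zero.1 hfac with h | h
    · left
      have hyx : y = x := by linear_combination h
      exact ⟨hyx, by linear_combination -E1 - h⟩
    · right; left
      have hyz : y = z := by linear_combination h
      exact ⟨hyz, by linear_combination -E1 - h⟩


/-- Counting lemma for primes: if `n` and `nA` are linearly independent mod `p`
and the eigenvalues of `A` are distinct mod `p`, then there are at most
`3 ord(A,p)²` solutions of `n(A^i - A^j + A^k - A^l) ≡ 0 (mod p)` with
`1 ≤ i,j,k,l ≤ ord(A,p)`. -/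
theorem count_prime
    (A : Matrix (Fin 2) (Fin 2) ℤ) (hA : A.det = 1) (htr : 2 < |A.trace|)
    (n : Fin 2 → ℤ) (p : ℕ) (hp : p.Prime)
    (hind : LinearIndependent (ZMod p)
      ![fun i => ((n i : ZMod p)), fun i => (((Matrix.vecMul n A i : ℤ) : ZMod p))])
    (hdist : ¬ ((p : ℤ) ∣ (A.trace ^ 2 - 4))) :
    nu A p n ≤ 3 * (matOrd A p) ^ 2 := by
  haveI : Fact p.Prime := ⟨hp⟩
  classical
  set T := matOrd A p with hTdef
  set φ : Matrix (Fin 2) (Fin 2) ℤ →+* Matrix (Fin 2) (Fin 2) (ZMod p) :=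
    (Int.castRingHom (ZMod p)).mapMatrix with hφdef
  set B : Matrix (Fin 2) (Fin 2) (ZMod p) := φ A with hBdef
  set s : ZMod p := ((A.trace : ℤ) : ZMod p) with hsdef
  have hφ_apply : ∀ (M : Matrix (Fin 2) (Fin 2) ℤ) i j, φ M i j = ((M i j : ℤ) : ZMod p) :=
    fun M i j => rfl
  have hBtr : B.trace = s := by
    simp [hBdef, hφdef, Matrix.trace, Matrix.diag, Fin.sum_univ_two, hsdef]
  have hBdet' : B.det = 1 := by
    rw [hBdef, hφdef, ← RingHom.map_det, hA]
    simp
  have hB2 : B ^ 2 = s • B - 1 := by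
    have h := sq_fin_two B
    rw [hBtr, hBdet', one_smul] at h
    exact h
  have hpow : ∀ k, (∀ i j, (p:ℤ) ∣ (A ^ k - 1) i j) ↔ B ^ k = 1 := by
    intro k
    have h1 : B ^ k - 1 = φ (A ^ k - 1) := by rw [map_sub, map_pow, _root_.map_one, hBdef]
    constructor
    · intro h
      have h2 : φ (A ^ k - 1) = 0 := by
        ext i j
        rw [hφ_apply]
        simpa using (ZMod.intCast_zmod_eq_zero_iff_dvd _ p).2 (h i j)
      rw [← h1] at h2
      exact sub_eq_zero.1 h2
    · intro h i j
      have h2 : φ (A ^ k - 1) i j = 0 := by rw [← h1, h, sub_self]; rfl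
      rw [hφ_apply] at h2
      exact (ZMod.intCast_zmod_eq_zero_iff_dvd _ p).1 h2
  have hne : Set.Nonempty {k | 0 < k ∧ ∀ i j, (p:ℤ) ∣ (A ^ k - 1) i j} := by
    have hu : IsUnit B := (Matrix.isUnit_iff_isUnit_det B).2 (by rw [hBdet']; exact isUnit_one)
    obtain ⟨ub, hub⟩ := hu
    refine ⟨orderOf ub, orderOf_pos ub, (hpow _).2 ?_⟩
    rw [← hub, ← Units.val_pow_eq_pow_val, pow_orderOf_eq_one, Units.val_one]
  have hT1 : 0 < T ∧ ∀ i j, (p:ℤ) ∣ (A ^ T - 1) i j := Nat.sInf_mem hne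
  have hTpos : 0 < T := hT1.1
  have hBT : B ^ T = 1 := (hpow T).1 hT1.2
  have hTmin : ∀ k, 0 < k → B ^ k = 1 → T ≤ k := fun k hk h1 => Nat.sInf_le ⟨hk, (hpow k).2 h1⟩
  -- the algebraic closure and the eigenvalues
  set K := AlgebraicClosure (ZMod p) with hKdef
  set e : ZMod p →+* K := algebraMap (ZMod p) K with hedef
  have heinj : Function.Injective e := e.injective
  have he0 : ∀ a : ZMod p, e a = 0 → a = 0 := fun a h => heinj (by rwa [map_zero])
  obtain ⟨lam, hlam0⟩ : ∃ x : K, x ^ 2 - e s * x + 1 = 0 := by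
    have hdeg : (X ^ 2 - C (e s) * X + 1 : K[X]).degree = 2 := by compute_degree!
    obtain ⟨x, hx⟩ := IsAlgClosed.exists_root (p := (X ^ 2 - C (e s) * X + 1 : K[X]))
      (by rw [hdeg]; decide)
    refine ⟨x, ?_⟩
    simpa [Polynomial.IsRoot] using hx
  have hlam : lam ^ 2 = s • lam - 1 := by
    rw [Algebra.smul_def]
    linear_combination hlam0
  set mu : K := e s - lam with hmudef
  have hmusq : mu ^ 2 = s • mu - 1 := by
    rw [Algebra.smul_def, hmudef]
    linear_combination hlam0
  have hprod : lam * mu = 1 := by rw [hmudef]; linear_combination -hlam0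
  have hlamne0 : lam ≠ 0 := left_ne_zero_of_mul_eq_one hprod
  have hmuinv : mu = lam⁻¹ := eq_inv_of_mul_eq_one_right hprod
  have hdiff : lam - mu ≠ 0 := by
    have h1 : (lam - mu) ^ 2 = e (s ^ 2 - 4) := by
      rw [map_sub, map_pow, hmudef]
      have h4 : (e 4 : K) = 4 := by rw [map_ofNat]
      rw [h4]
      linear_combination 4 * hlam0
    have h2 : (s ^ 2 - 4 : ZMod p) ≠ 0 := by
      intro h
      apply hdist
      have h3 : ((A.trace ^ 2 - 4 : ℤ) : ZMod p) = 0 := by push_cast; rw [← hsdef] at *; push_cast at h ⊢; linear_combination h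
      exact (ZMod.intCast_zmod_eq_zero_iff_dvd _ _).1 h3
    intro h
    apply h2
    apply he0
    rw [← h1, h]
    ring
  have hlk : ∀ k : ℕ, lam ^ k = e (uvp s k).1 * lam + e (uvp s k).2 := by
    intro k
    have h := pow_uvp s lam hlam k
    simpa [Algebra.smul_def] using h
  have hmk : ∀ k : ℕ, mu ^ k = e (uvp s k).1 * mu + e (uvp s k).2 := by
    intro k
    have h := pow_uvp s mu hmusq k
    simpa [Algebra.smul_def] using h
  have hBk : ∀ k, B ^ k = (uvp s k).1 • B + (uvp s k).2 • 1 := pow_uvp s B hB2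
  have hlam_ord : ∀ d : ℕ, lam ^ d = 1 → B ^ d = 1 := by
    intro d hd
    have hmd : mu ^ d = 1 := by rw [hmuinv, inv_pow, hd, inv_one]
    have h1 := hlk d; rw [hd] at h1
    have h2 := hmk d; rw [hmd] at h2
    have hu : (uvp s d).1 = 0 := by
      apply he0
      have h3 : e (uvp s d).1 * (lam - mu) = 0 := by linear_combination h2 - h1
      rcases mul_eq_zero.1 h3 with h | h
      · exact h
      · exact absurd h hdiff
    have hv : (uvp s d).2 = 1 := by
      apply heinj
      rw [_root_.map_one]
      rw [hu, map_zero, zero_mul, zero_add] at h1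
      exact h1.symm
    rw [hBk d, hu, hv]
    simp
  have hpow_inj : ∀ a b, a ∈ Finset.Icc 1 T → b ∈ Finset.Icc 1 T → lam ^ a = lam ^ b → a = b := by
    have haux : ∀ a b, a ∈ Finset.Icc 1 T → b ∈ Finset.Icc 1 T → a ≤ b → lam ^ a = lam ^ b →
        a = b := by
      intro a b ha hb hab h
      by_contra hne2
      have h1a := Finset.mem_Icc.1 ha
      have h1b := Finset.mem_Icc.1 hb
      have hd0 : 0 < b - a := by omega
      have hsplit : lam ^ b = lam ^ a * lam ^ (b - a) := by
        rw [← pow_add]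
        congr 1
        omega
      have hpa : lam ^ a ≠ 0 := pow_ne_zero _ hlamne0
      have hld : lam ^ (b - a) = 1 :=
        mul_left_cancel₀ hpa (by rw [mul_one, ← hsplit]; exact h.symm)
      have := hTmin (b - a) hd0 (hlam_ord _ hld)
      omega
    intro a b ha hb h
    rcases le_total a b with hab | hab
    · exact haux a b ha hb hab h
    · exact (haux b a hb ha hab h.symm).symm
  -- translation of the linear independence hypothesis
  set n' : Fin 2 → ZMod p := fun i => ((n i : ZMod p)) with hn'def
  have hvM : ∀ (M : Matrix (Fin 2) (Fin 2) ℤ) (m : Fin 2),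
      ((vecMul n M m : ℤ) : ZMod p) = vecMul n' (φ M) m := by
    intro M m
    simp [Matrix.vecMul, dotProduct, Fin.sum_univ_two, hn'def, hφdef,
      RingHom.mapMatrix_apply, Matrix.map_apply]
  have hpair : ∀ a b : ZMod p, a • n' + b • vecMul n' B = 0 → a = 0 ∧ b = 0 := by
    have h2 : (fun i => (((Matrix.vecMul n A i : ℤ) : ZMod p))) = vecMul n' B := by
      funext m
      exact hvM A m
    rw [LinearIndependent.pair_iff] at hind
    intro a b hab
    exact hind a b (by rw [h2]; exact hab)
  -- the master equivalence
  have hcond : ∀ i j k l : ℕ,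
      (∀ m, (p:ℤ) ∣ vecMul n (A ^ i - A ^ j + A ^ k - A ^ l) m) ↔
      (lam ^ i + lam ^ k = lam ^ j + lam ^ l ∧ mu ^ i + mu ^ k = mu ^ j + mu ^ l) := by
    intro i j k l
    set U : ZMod p := (uvp s i).1 - (uvp s j).1 + (uvp s k).1 - (uvp s l).1 with hUdef
    set V : ZMod p := (uvp s i).2 - (uvp s j).2 + (uvp s k).2 - (uvp s l).2 with hVdef
    have hDB : B ^ i - B ^ j + B ^ k - B ^ l = U • B + V • 1 := by
      rw [hBk i, hBk j, hBk k, hBk l, hUdef, hVdef]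
      module
    have hφD : φ (A ^ i - A ^ j + A ^ k - A ^ l) = B ^ i - B ^ j + B ^ k - B ^ l := by
      rw [map_sub, map_add, map_sub, map_pow, map_pow, map_pow, map_pow, hBdef]
    have step1 : (∀ m, (p:ℤ) ∣ vecMul n (A ^ i - A ^ j + A ^ k - A ^ l) m) ↔
        vecMul n' (B ^ i - B ^ j + B ^ k - B ^ l) = 0 := by
      constructor
      · intro h
        funext m
        rw [← hφD, ← hvM]
        simpa using (ZMod.intCast_zmod_eq_zero_iff_dvd _ _).2 (h m)
      · intro h m
        have h2 : vecMul n' (φ (A ^ i - A ^ j + A ^ k - A ^ l)) m = 0 := by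
          rw [hφD, h]
          rfl
        rw [← hvM] at h2
        exact (ZMod.intCast_zmod_eq_zero_iff_dvd _ _).1 h2
    have step2 : vecMul n' (B ^ i - B ^ j + B ^ k - B ^ l) = 0 ↔ (U = 0 ∧ V = 0) := by
      rw [hDB]
      have hexp : vecMul n' (U • B + V • 1) = V • n' + U • vecMul n' B := by
        funext m
        fin_cases m <;>
          simp [Matrix.vecMul, dotProduct, Fin.sum_univ_two, Matrix.one_apply] <;>
          ring
      rw [hexp]
      constructor
      · intro h
        obtain ⟨hV0, hU0⟩ := hpair V U h
        exact ⟨hU0, hV0⟩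
      · rintro ⟨h1, h2⟩
        rw [h1, h2]
        simp
    have step3 : (U = 0 ∧ V = 0) ↔
        (lam ^ i + lam ^ k = lam ^ j + lam ^ l ∧ mu ^ i + mu ^ k = mu ^ j + mu ^ l) := by
      have hLlam : lam ^ i + lam ^ k - (lam ^ j + lam ^ l) = e U * lam + e V := by
        rw [hlk i, hlk j, hlk k, hlk l, hUdef, hVdef]
        simp only [map_sub, map_add]
        ring
      have hLmu : mu ^ i + mu ^ k - (mu ^ j + mu ^ l) = e U * mu + e V := by
        rw [hmk i, hmk j, hmk k, hmk l, hUdef, hVdef]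
        simp only [map_sub, map_add]
        ring
      constructor
      · rintro ⟨h1, h2⟩
        rw [h1, h2] at hLlam hLmu
        simp only [map_zero, zero_mul, zero_add, add_zero] at hLlam hLmu
        exact ⟨sub_eq_zero.1 hLlam, sub_eq_zero.1 hLmu⟩
      · rintro ⟨h1, h2⟩
        have e1 : e U * lam + e V = 0 := by rw [← hLlam, h1, sub_self]
        have e2 : e U * mu + e V = 0 := by rw [← hLmu, h2, sub_self]
        have hU0 : U = 0 := by
          apply he0
          have h3 : e U * (lam - mu) = 0 := by linear_combination e1 - e2
          rcases mul_eq_zero.1 h3 with h | h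
          · exact h
          · exact absurd h hdiff
        refine ⟨hU0, ?_⟩
        apply he0
        rw [hU0, map_zero, zero_mul, zero_add] at e1
        exact e1
    rw [step1, step2, step3]
  -- counting
  unfold nu
  rw [← hTdef]
  set Ic := Finset.Icc 1 T with hIcdef
  have hIcard : Ic.card = T := by rw [hIcdef, Nat.card_Icc]; omega
  set Box : Finset (ℕ × ℕ × ℕ × ℕ) := Ic ×ˢ Ic ×ˢ Ic ×ˢ Ic with hBoxdef
  have hmemBox : ∀ q : ℕ × ℕ × ℕ × ℕ,
      q ∈ Box ↔ q.1 ∈ Ic ∧ q.2.1 ∈ Ic ∧ q.2.2.1 ∈ Ic ∧ q.2.2.2 ∈ Ic := by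
    intro q
    simp [hBoxdef, Finset.mem_product]
  set S1 : Set (ℕ × ℕ × ℕ × ℕ) := {q | q ∈ Box ∧ q.2.1 = q.1 ∧ q.2.2.2 = q.2.2.1} with hS1def
  set S2 : Set (ℕ × ℕ × ℕ × ℕ) := {q | q ∈ Box ∧ q.2.1 = q.2.2.1 ∧ q.2.2.2 = q.1} with hS2def
  set S3 : Set (ℕ × ℕ × ℕ × ℕ) :=
    {q | q ∈ Box ∧ lam ^ q.2.2.1 = -lam ^ q.1 ∧ lam ^ q.2.2.2 = -lam ^ q.2.1} with hS3def
  have hS1f : S1.Finite := (Box.finite_toSet).subset (fun q hq => hq.1)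
  have hS2f : S2.Finite := (Box.finite_toSet).subset (fun q hq => hq.1)
  have hS3f : S3.Finite := (Box.finite_toSet).subset (fun q hq => hq.1)
  have hsub : {q : ℕ × ℕ × ℕ × ℕ |
      q.1 ∈ Finset.Icc 1 T ∧ q.2.1 ∈ Finset.Icc 1 T ∧
      q.2.2.1 ∈ Finset.Icc 1 T ∧ q.2.2.2 ∈ Finset.Icc 1 T ∧
      ∀ m, (p : ℤ) ∣ Matrix.vecMul n (A ^ q.1 - A ^ q.2.1 + A ^ q.2.2.1 - A ^ q.2.2.2) m} ⊆
      S1 ∪ S2 ∪ S3 := by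
    rintro ⟨i, j, k, l⟩ ⟨hi, hj, hk, hl, hcongr⟩
    obtain ⟨E1, E2⟩ := (hcond i j k l).1 hcongr
    have hbox : (i, j, k, l) ∈ Box := (hmemBox _).2 ⟨hi, hj, hk, hl⟩
    have hx0 : lam ^ i ≠ 0 := pow_ne_zero _ hlamne0
    have hy0 : lam ^ j ≠ 0 := pow_ne_zero _ hlamne0
    have hz0 : lam ^ k ≠ 0 := pow_ne_zero _ hlamne0
    have hw0 : lam ^ l ≠ 0 := pow_ne_zero _ hlamne0
    have hE2' : (lam ^ i)⁻¹ + (lam ^ k)⁻¹ = (lam ^ j)⁻¹ + (lam ^ l)⁻¹ := by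
      simpa [hmuinv, inv_pow] using E2
    simp only [Set.mem_union]
    rcases quad_cases hx0 hy0 hz0 hw0 E1 hE2' with ⟨h1, h2⟩ | ⟨h1, h2⟩ | ⟨h1, h2⟩
    · exact Or.inl (Or.inl ⟨hbox, hpow_inj j i hj hi h1, hpow_inj l k hl hk h2⟩)
    · exact Or.inl (Or.inr ⟨hbox, hpow_inj j k hj hk h1, hpow_inj l i hl hi h2⟩)
    · exact Or.inr ⟨hbox, h1, h2⟩
  have htgtf : (((Ic ×ˢ Ic : Finset (ℕ × ℕ)) : Set (ℕ × ℕ))).Finite := Finset.finite_toSet _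
  have htgt : (((Ic ×ˢ Ic : Finset (ℕ × ℕ)) : Set (ℕ × ℕ))).ncard = T ^ 2 := by
    rw [Set.ncard_coe_finset, Finset.card_product, hIcard]
    ring
  have hb1 : S1.ncard ≤ T ^ 2 := by
    rw [← htgt]
    apply Set.ncard_le_ncard_of_injOn (fun q => (q.1, q.2.2.1))
    · rintro ⟨i, j, k, l⟩ ⟨hbox, h1, h2⟩
      have hm := (hmemBox _).1 hbox
      simp only [Finset.coe_product, Set.mem_prod]
      exact ⟨hm.1, hm.2.2.1⟩
    · rintro ⟨i, j, k, l⟩ ⟨hbox, h1, h2⟩ ⟨i', j', k', l'⟩ ⟨hbox', h1', h2'⟩ heq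
      simp only [Prod.mk.injEq] at heq
      simp only [Prod.mk.injEq]
      refine ⟨heq.1, ?_, heq.2, ?_⟩ <;> simp only at h1 h2 h1' h2' <;> omega
  have hb2 : S2.ncard ≤ T ^ 2 := by
    rw [← htgt]
    apply Set.ncard_le_ncard_of_injOn (fun q => (q.1, q.2.1))
    · rintro ⟨i, j, k, l⟩ ⟨hbox, h1, h2⟩
      have hm := (hmemBox _).1 hbox
      simp only [Finset.coe_product, Set.mem_prod]
      exact ⟨hm.1, hm.2.1⟩
    · rintro ⟨i, j, k, l⟩ ⟨hbox, h1, h2⟩ ⟨i', j', k', l'⟩ ⟨hbox', h1', h2'⟩ heq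
      simp only [Prod.mk.injEq] at heq
      simp only [Prod.mk.injEq]
      refine ⟨heq.1, heq.2, ?_, ?_⟩ <;> simp only at h1 h2 h1' h2' <;> omega
  have hb3 : S3.ncard ≤ T ^ 2 := by
    rw [← htgt]
    apply Set.ncard_le_ncard_of_injOn (fun q => (q.1, q.2.1))
    · rintro ⟨i, j, k, l⟩ ⟨hbox, h1, h2⟩
      have hm := (hmemBox _).1 hbox
      simp only [Finset.coe_product, Set.mem_prod]
      exact ⟨hm.1, hm.2.1⟩
    · rintro ⟨i, j, k, l⟩ ⟨hbox, h1, h2⟩ ⟨i', j', k', l'⟩ ⟨hbox', h1', h2'⟩ heq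
      simp only [Prod.mk.injEq] at heq
      simp only at h1 h2 h1' h2'
      have hm := (hmemBox _).1 hbox
      have hm' := (hmemBox _).1 hbox'
      obtain ⟨e1, e2⟩ := heq
      have hk' : k = k' := by
        apply hpow_inj k k' hm.2.2.1 hm'.2.2.1
        rw [h1, h1', e1]
      have hl' : l = l' := by
        apply hpow_inj l l' hm.2.2.2 hm'.2.2.2
        rw [h2, h2', e2]
      simp only [Prod.mk.injEq]
      exact ⟨e1, e2, hk', hl'⟩
  calc ({q : ℕ × ℕ × ℕ × ℕ |
      q.1 ∈ Finset.Icc 1 T ∧ q.2.1 ∈ Finset.Icc 1 T ∧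
      q.2.2.1 ∈ Finset.Icc 1 T ∧ q.2.2.2 ∈ Finset.Icc 1 T ∧
      ∀ m, (p : ℤ) ∣ Matrix.vecMul n (A ^ q.1 - A ^ q.2.1 + A ^ q.2.2.1 - A ^ q.2.2.2) m}).ncard
      ≤ (S1 ∪ S2 ∪ S3).ncard :=
        Set.ncard_le_ncard hsub ((hS1f.union hS2f).union hS3f)
    _ ≤ (S1 ∪ S2).ncard + S3.ncard := Set.ncard_union_le _ _
    _ ≤ S1.ncard + S2.ncard + S3.ncard := by
        have := Set.ncard_union_le S1 S2
        omega
    _ ≤ T ^ 2 + T ^ 2 + T ^ 2 := by omega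
    _ = 3 * T ^ 2 := by ring
end

section
/- Let N be squarefree and coprime to D_A = 4(tr(A)² − 4), and suppose that for every prime p dividing N the row vectors n and nA are linearly independent modulo p. Then the number of quadruples (i,j,k,l) with 1 ≤ i,j,k,l ≤ ord(A,N) satisfying n(A^i − A^j + A^k − A^l) ≡ 0 (mod N) is at most 3^{ω(N)}·ord(A,N)². -/
open Matrix

/-!
Fix a prime `p ∣ N` and let `g` be `A` modulo `p`. The matrix `B = A^i - A^j + A^k - A^l`
commutes with `A`, so `nB ≡ 0` gives `nAB ≡ 0`; as `n` and `nA` span `𝔽_p²`, `B ≡ 0 (mod p)`.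
The powers of `g` lie in the commutative algebra `𝔽_p[g] = 𝔽_p + 𝔽_p g`, where the discriminant
of `c + d g` is `d²` times that of `g`, which is nonzero because `p ∤ tr(A)² - 4`; hence an element
of determinant one with eigenvalue one is the identity, and `det (x - y) = 0` forces `x = y` for
`x, y` of determinant one. Adding to `a + c = b + d` the same relation for the inverses
`x⁻¹ = tr x - x` yields `(a - b)(a - d)(a + c) = 0`, so modulo `p` either `g^i = g^j, g^k = g^l`,
or `g^i = g^l, g^k = g^j`, or `g^k = -g^i, g^l = -g^j`.

Fix one of these three shapes at every prime. Then `i` determines `k` modulo the lcm `L` of the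
orders `ord(A, p)` at the primes of the third shape, `(i, k)` determine `j` modulo the lcm `M` of
the other orders, and `(i, j, k)` determine `l` modulo `ord(A, N) = lcm_p ord(A, p)`. Since
`ord(A, N) ∣ L M`, at most `ord(A, N)²` quadruples have the chosen shapes, and there are `3^ω(N)`
choices.
-/

open scoped IsMulCommutative

namespace Matrix

section CommRing

variable {R : Type*} [CommRing R]

theorem adjugate_eq_trace_smul_one_sub (M : Matrix (Fin 2) (Fin 2) R) :
    adjugate M = M.trace • 1 - M := by
  ext i j
  fin_cases i <;> fin_cases j <;> simp [adjugate_fin_two, trace_fin_two]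

theorem mul_self_eq_trace_smul_sub_det_smul (M : Matrix (Fin 2) (Fin 2) R) :
    M * M = M.trace • M - M.det • 1 := by
  have h := mul_adjugate M
  rw [adjugate_eq_trace_smul_one_sub, mul_sub, mul_smul_comm, mul_one] at h
  rw [← h]
  abel

theorem det_smul_one_add_smul (M : Matrix (Fin 2) (Fin 2) R) (c d : R) :
    (c • 1 + d • M).det = c ^ 2 + c * d * M.trace + d ^ 2 * M.det := by
  simp [det_fin_two, trace_fin_two]
  ring

theorem det_neg_fin_two (M : Matrix (Fin 2) (Fin 2) R) : (-M).det = M.det := by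
  simp [det_neg]

variable {u : Matrix (Fin 2) (Fin 2) R}

theorem exists_eq_smul_one_add_smul_of_mem_adjoin {M : Matrix (Fin 2) (Fin 2) R}
    (hM : M ∈ Algebra.adjoin R {u}) : ∃ c d : R, M = c • 1 + d • u := by
  induction hM using Algebra.adjoin_induction with
  | mem x hx => exact ⟨0, 1, by simp_all⟩
  | algebraMap r => exact ⟨r, 0, by simp [Algebra.algebraMap_eq_smul_one]⟩
  | add x y _ _ hx hy =>
    obtain ⟨c, d, rfl⟩ := hx
    obtain ⟨c', d', rfl⟩ := hy
    exact ⟨c + c', d + d', by module⟩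
  | mul x y _ _ hx hy =>
    obtain ⟨c, d, rfl⟩ := hx
    obtain ⟨c', d', rfl⟩ := hy
    refine ⟨c * c' - d * d' * u.det, c * d' + d * c' + d * d' * u.trace, ?_⟩
    simp only [add_mul, mul_add, smul_mul_smul_comm, one_mul, mul_one,
      mul_self_eq_trace_smul_sub_det_smul]
    module

theorem mul_algebraMap_trace_sub_eq_one {x : Algebra.adjoin R {u}} (hx : x.1.det = 1) :
    x * (algebraMap R _ x.1.trace - x) = 1 := by
  apply Subtype.ext
  rw [Subalgebra.coe_mul, Subalgebra.coe_sub, Subalgebra.coe_algebraMap,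
    Algebra.algebraMap_eq_smul_one, ← adjugate_eq_trace_smul_one_sub, mul_adjugate, hx, one_smul,
    Subalgebra.coe_one]

end CommRing

section IsDomain

variable {R : Type*} [CommRing R] [IsDomain R] {u : Matrix (Fin 2) (Fin 2) R}

theorem eq_one_of_mem_adjoin_of_det_sub_one_eq_zero (hu : u.trace ^ 2 - 4 * u.det ≠ 0)
    {M : Matrix (Fin 2) (Fin 2) R} (hM : M ∈ Algebra.adjoin R {u}) (hdet : M.det = 1)
    (hdet' : (M - 1).det = 0) : M = 1 := by
  obtain ⟨c, d, rfl⟩ := exists_eq_smul_one_add_smul_of_mem_adjoin hM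
  rw [show c • 1 + d • u - 1 = (c - 1) • 1 + d • u by module, det_smul_one_add_smul] at hdet'
  rw [det_smul_one_add_smul] at hdet
  have htr : 2 * c + d * u.trace - 2 = 0 := by linear_combination hdet - hdet'
  -- the discriminant of `c • 1 + d • u` is `d ^ 2` times that of `u`
  have hd : d ^ 2 * (u.trace ^ 2 - 4 * u.det) = 0 := by
    linear_combination (2 * c + d * u.trace + 2) * htr - 4 * hdet
  obtain rfl : d = 0 := pow_eq_zero_iff two_ne_zero |>.mp ((mul_eq_zero.mp hd).resolve_right hu)
  obtain rfl : c = 1 := by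
    have : (c - 1) ^ 2 = 0 := by linear_combination hdet - htr
    exact sub_eq_zero.mp (pow_eq_zero_iff two_ne_zero |>.mp this)
  simp

theorem eq_of_det_sub_eq_zero (hu : u.trace ^ 2 - 4 * u.det ≠ 0) {x y : Algebra.adjoin R {u}}
    (hx : x.1.det = 1) (hy : y.1.det = 1) (hxy : (x - y).1.det = 0) : x = y := by
  set x' := algebraMap R _ x.1.trace - x
  have hxx' : x * x' = 1 := mul_algebraMap_trace_sub_eq_one hx
  have hx' : x'.1.det = 1 := by
    simpa [hx] using congrArg (fun z : Algebra.adjoin R {u} => z.1.det) hxx'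
  have hx'y : x' * y = 1 := by
    refine Subtype.ext (eq_one_of_mem_adjoin_of_det_sub_one_eq_zero hu (x' * y).2
      (by simp [det_mul, hx', hy]) ?_)
    have : (x' * y).1 - 1 = -(x' * (x - y)).1 := by
      rw [mul_sub, mul_comm x' x, hxx']
      push_cast
      abel
    rw [this, det_neg_fin_two, Subalgebra.coe_mul, det_mul, hx', one_mul, hxy]
  calc x = x * (x' * y) := by rw [hx'y, mul_one]
    _ = y := by rw [← mul_assoc, hxx', one_mul]

theorem eq_or_eq_or_eq_neg_of_sub_add_sub_eq_zero (hu : u.trace ^ 2 - 4 * u.det ≠ 0)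
    {a b c d : Algebra.adjoin R {u}} (ha : a.1.det = 1) (hb : b.1.det = 1) (hc : c.1.det = 1)
    (hd : d.1.det = 1) (h : a - b + c - d = 0) :
    (a = b ∧ c = d) ∨ (a = d ∧ c = b) ∨ (c = -a ∧ d = -b) := by
  have htr : a.1.trace - b.1.trace + c.1.trace - d.1.trace = 0 := by
    simpa [trace_sub, trace_add] using congrArg (fun z : Algebra.adjoin R {u} => z.1.trace) h
  have htr' := congrArg (algebraMap R (Algebra.adjoin R {u})) htr
  simp only [map_sub, map_add, map_zero] at htr'
  have hprod : (a - b) * (a - d) * (a + c) = 0 := by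
    have ha' := mul_algebraMap_trace_sub_eq_one ha
    have hb' := mul_algebraMap_trace_sub_eq_one hb
    have hc' := mul_algebraMap_trace_sub_eq_one hc
    have hd' := mul_algebraMap_trace_sub_eq_one hd
    linear_combination (a ^ 2 - a * b * c * d) * h + a * b * c * d * htr' - b * c * d * ha'
      - a * b * d * hc' + a * c * d * hb' + a * b * c * hd'
  have hdet := congrArg (fun z : Algebra.adjoin R {u} => z.1.det) hprod
  simp only [Subalgebra.coe_mul, det_mul, Subalgebra.coe_zero, det_zero, mul_eq_zero] at hdet
  rcases hdet with (hab | had) | hac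
  · obtain rfl := eq_of_det_sub_eq_zero hu ha hb hab
    exact .inl ⟨rfl, by linear_combination h⟩
  · obtain rfl := eq_of_det_sub_eq_zero hu ha hd had
    exact .inr (.inl ⟨rfl, by linear_combination h⟩)
  · have hc' : (-c).1.det = 1 := by rw [Subalgebra.coe_neg, det_neg_fin_two, hc]
    obtain rfl := eq_of_det_sub_eq_zero hu ha hc' (by rwa [sub_neg_eq_add])
    exact .inr (.inr ⟨by simp, by linear_combination -h⟩)

end IsDomain

theorem eq_zero_of_forall_vecMul_eq_zero {K m n : Type*} [Field K] [Fintype m] [DecidableEq m]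
    {v : m → m → K} (hv : LinearIndependent K v) {B : Matrix m n K} (h : ∀ r, v r ᵥ* B = 0) :
    B = 0 := by
  have hW : IsUnit (of v).det :=
    (isUnit_iff_isUnit_det _).mp (linearIndependent_rows_iff_isUnit.mp hv)
  have hWB : of v * B = 0 := by
    ext r c
    rw [mul_apply_eq_vecMul]
    exact congrFun (h r) c
  rw [← B.one_mul, ← nonsing_inv_mul _ hW, Matrix.mul_assoc, hWB, Matrix.mul_zero]

end Matrix

section VanishingPattern

variable {G : Type*} [Monoid G] [HasDistribNeg G]

def VanishingPattern (g : G) (i j k l : ℕ) : Fin 3 → Prop :=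
  ![g ^ i = g ^ j ∧ g ^ k = g ^ l, g ^ i = g ^ l ∧ g ^ k = g ^ j, g ^ k = -g ^ i ∧ g ^ l = -g ^ j]

theorem VanishingPattern.pow_eq_pow {g : G} {i j k l j' k' l' : ℕ} {t : Fin 3}
    (h : VanishingPattern g i j k l t) (h' : VanishingPattern g i j' k' l' t) :
    (t = 2 → g ^ k = g ^ k') ∧ (k = k' → t ≠ 2 → g ^ j = g ^ j') ∧
      (j = j' → k = k' → g ^ l = g ^ l') := by
  fin_cases t <;> simp only [VanishingPattern, Fin.reduceFinMk, Matrix.cons_val] at h h' ⊢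
  · exact ⟨by simp, fun _ _ => h.1.symm.trans h'.1, fun _ hk => by rw [← h.2, ← h'.2, hk]⟩
  · exact ⟨by simp, fun hk _ => by rw [← h.2, ← h'.2, hk], fun _ _ => h.1.symm.trans h'.1⟩
  · exact ⟨fun _ => h.1.trans h'.1.symm, fun _ h2 => absurd rfl h2,
      fun hj _ => by rw [h.2, h'.2, hj]⟩

end VanishingPattern

namespace Matrix.SpecialLinearGroup

theorem exists_vanishingPattern {R : Type*} [CommRing R] [IsDomain R]
    {g : SpecialLinearGroup (Fin 2) R} (hg : g.1.trace ^ 2 ≠ 4) {i j k l : ℕ}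
    (h : g.1 ^ i - g.1 ^ j + g.1 ^ k - g.1 ^ l = 0) : ∃ t, VanishingPattern g i j k l t := by
  have hu : g.1.trace ^ 2 - 4 * g.1.det ≠ 0 := by rwa [g.2, mul_one, sub_ne_zero]
  let pw (e : ℕ) : Algebra.adjoin R {g.1} :=
    ⟨g.1 ^ e, Subalgebra.pow_mem _ (Algebra.self_mem_adjoin_singleton R _) e⟩
  have hdet (e : ℕ) : (pw e).1.det = 1 := by simp [pw, det_pow, g.2]
  have hpw (e e' : ℕ) : pw e = pw e' ↔ g ^ e = g ^ e' := by
    simp only [pw, Subtype.mk.injEq, ← coe_pow]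
    exact Subtype.coe_injective.eq_iff
  have hpw_neg (e e' : ℕ) : pw e = -pw e' ↔ g ^ e = -g ^ e' := by
    rw [← Subtype.val_inj, Subalgebra.coe_neg]
    simp only [pw, ← coe_pow, ← coe_neg]
    exact Subtype.coe_injective.eq_iff
  rcases eq_or_eq_or_eq_neg_of_sub_add_sub_eq_zero hu (hdet i) (hdet j) (hdet k) (hdet l)
    (Subtype.ext h) with ⟨h₁, h₂⟩ | ⟨h₁, h₂⟩ | ⟨h₁, h₂⟩
  · exact ⟨0, (hpw i j).mp h₁, (hpw k l).mp h₂⟩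
  · exact ⟨1, (hpw i l).mp h₁, (hpw k j).mp h₂⟩
  · exact ⟨2, (hpw_neg k i).mp h₁, (hpw_neg l j).mp h₂⟩

theorem exists_vanishingPattern_of_vecMul {K : Type*} [Field K] {g : SpecialLinearGroup (Fin 2) K}
    (hg : g.1.trace ^ 2 ≠ 4) {v : Fin 2 → K} (hv : LinearIndependent K ![v, v ᵥ* g.1])
    {i j k l : ℕ} (h : v ᵥ* (g.1 ^ i - g.1 ^ j + g.1 ^ k - g.1 ^ l) = 0) :
    ∃ t, VanishingPattern g i j k l t := by
  have hcomm : Commute g.1 (g.1 ^ i - g.1 ^ j + g.1 ^ k - g.1 ^ l) :=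
    (((Commute.self_pow _ i).sub_right (.self_pow _ j)).add_right (.self_pow _ k)).sub_right
      (.self_pow _ l)
  refine exists_vanishingPattern hg (eq_zero_of_forall_vecMul_eq_zero hv fun r => ?_)
  fin_cases r
  · exact h
  · show (v ᵥ* g.1) ᵥ* (g.1 ^ i - g.1 ^ j + g.1 ^ k - g.1 ^ l) = 0
    rw [vecMul_vecMul, hcomm.eq, ← vecMul_vecMul, h, zero_vecMul]

end Matrix.SpecialLinearGroup

section Reduction

variable {n : Type*} [Fintype n] [DecidableEq n]

abbrev reduceMod (m : ℕ) : SpecialLinearGroup n ℤ →* SpecialLinearGroup n (ZMod m) :=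
  SpecialLinearGroup.map (Int.castRingHom (ZMod m))

theorem reduceMod_eq_one_iff {m : ℕ} {x : SpecialLinearGroup n ℤ} :
    reduceMod m x = 1 ↔ ∀ i j, (m : ℤ) ∣ (x.1 - 1) i j := by
  rw [Matrix.SpecialLinearGroup.ext_iff]
  refine forall₂_congr fun i j => ?_
  rw [Matrix.sub_apply, ← ZMod.intCast_zmod_eq_zero_iff_dvd, Int.cast_sub, sub_eq_zero]
  by_cases hij : i = j <;> simp [hij, one_apply]

theorem Int.natCast_dvd_iff_forall_mem_primeFactors {N : ℕ} (hN : Squarefree N) {z : ℤ} :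
    (N : ℤ) ∣ z ↔ ∀ p ∈ N.primeFactors, (p : ℤ) ∣ z := by
  refine ⟨fun h p hp => (Int.natCast_dvd_natCast.mpr (Nat.dvd_of_mem_primeFactors hp)).trans h,
    fun h => ?_⟩
  rw [Int.natCast_dvd, ← Nat.prod_primeFactors_of_squarefree hN]
  exact Finset.prod_primes_dvd _ (fun p hp => (Nat.prime_of_mem_primeFactors hp).prime)
    fun p hp => Int.natCast_dvd.mp (h p hp)

theorem reduceMod_eq_one_iff_forall_mem_primeFactors {N : ℕ} (hN : Squarefree N)
    {x : SpecialLinearGroup n ℤ} :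
    reduceMod N x = 1 ↔ ∀ p ∈ N.primeFactors, reduceMod p x = 1 := by
  simp only [reduceMod_eq_one_iff, Int.natCast_dvd_iff_forall_mem_primeFactors hN]
  exact ⟨fun h p hp i j => h i j p hp, fun h i j p hp => h p hp i j⟩

theorem orderOf_reduceMod_eq_lcm {N : ℕ} (hN : Squarefree N) (x : SpecialLinearGroup n ℤ) :
    orderOf (reduceMod N x) =
      Finset.univ.lcm fun p : N.primeFactors => orderOf (reduceMod p x) := by
  refine Nat.dvd_right_iff_eq.mp fun e => ?_
  simp only [orderOf_dvd_iff_pow_eq_one, ← map_pow, reduceMod_eq_one_iff_forall_mem_primeFactors hN,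
    Finset.lcm_dvd_iff, Finset.mem_univ, true_implies, Subtype.forall]

end Reduction

theorem orderOf_eq_sInf {G : Type*} [Monoid G] (x : G) :
    orderOf x = sInf {k | 0 < k ∧ x ^ k = 1} := by
  simp [orderOf, Function.minimalPeriod_eq_sInf_n_pos_IsPeriodicPt, isPeriodicPt_mul_iff_pow_eq_one]

theorem matOrd_eq_orderOf (γ : SpecialLinearGroup (Fin 2) ℤ) (N : ℕ) :
    matOrd γ N = orderOf (reduceMod N γ) := by
  simp only [matOrd, orderOf_eq_sInf, ← map_pow, reduceMod_eq_one_iff,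
    Matrix.SpecialLinearGroup.coe_pow]

theorem exists_vanishingPattern_reduceMod {p : ℕ} [Fact p.Prime] {γ : SpecialLinearGroup (Fin 2) ℤ}
    (hγ : ¬ (p : ℤ) ∣ γ.1.trace ^ 2 - 4) {v : Fin 2 → ℤ}
    (hv : LinearIndependent (ZMod p) ![fun m => (v m : ZMod p), fun m => ((v ᵥ* γ.1) m : ZMod p)])
    {i j k l : ℕ} (h : ∀ m, (p : ℤ) ∣ (v ᵥ* (γ.1 ^ i - γ.1 ^ j + γ.1 ^ k - γ.1 ^ l)) m) :
    ∃ t, VanishingPattern (reduceMod p γ) i j k l t := by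
  have hcast (X : Matrix (Fin 2) (Fin 2) ℤ) : (fun m => ((v ᵥ* X) m : ZMod p)) =
      (fun m => (v m : ZMod p)) ᵥ* (Int.castRingHom (ZMod p)).mapMatrix X :=
    funext fun m => RingHom.map_vecMul (Int.castRingHom (ZMod p)) X v m
  have hred : (reduceMod p γ).1 = (Int.castRingHom (ZMod p)).mapMatrix γ.1 := rfl
  have htr : (reduceMod p γ).1.trace = γ.1.trace := by simp [trace_fin_two]
  refine SpecialLinearGroup.exists_vanishingPattern_of_vecMul (v := fun m => (v m : ZMod p))
    (fun h4 => hγ ?_) (by rwa [hred, ← hcast]) ?_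
  · rw [← ZMod.intCast_zmod_eq_zero_iff_dvd, Int.cast_sub, Int.cast_pow, ← htr, h4]
    norm_num
  · simp only [hred, ← map_pow, ← map_sub, ← map_add, ← hcast]
    exact funext fun m => (ZMod.intCast_zmod_eq_zero_iff_dvd _ _).mpr (h m)

theorem Nat.div_mul_div_le_of_dvd_mul {T L M : ℕ} (hL : L ∣ T) (hM : M ∣ T) (hT : T ∣ L * M) :
    T / L * (T / M) ≤ T := by
  rcases Nat.eq_zero_or_pos T with rfl | hTpos
  · simp
  obtain ⟨c, hc⟩ := hT
  have hLM : T / L * (T / M) * (L * M) = T * T := by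
    rw [mul_mul_mul_comm, Nat.div_mul_cancel hL, Nat.div_mul_cancel hM]
  have : T / L * (T / M) * c = T := Nat.eq_of_mul_eq_mul_left hTpos (by rw [← hLM, hc]; ring)
  exact Nat.le_of_dvd hTpos ⟨c, this.symm⟩

theorem Nat.modEq_finset_lcm_iff {ι : Type*} {s : Finset ι} {f : ι → ℕ} {a b : ℕ} :
    a ≡ b [MOD s.lcm f] ↔ ∀ p ∈ s, a ≡ b [MOD f p] := by
  simp only [Nat.modEq_iff_dvd, Int.natCast_dvd, Finset.lcm_dvd_iff]

theorem Nat.eq_of_modEq_of_sub_one_div_eq {m a b : ℕ} (ha : 1 ≤ a) (hb : 1 ≤ b)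
    (h : a ≡ b [MOD m]) (hdiv : (a - 1) / m = (b - 1) / m) : a = b := by
  have hmod : (a - 1) % m = (b - 1) % m :=
    Nat.ModEq.add_right_cancel' 1 (by rwa [Nat.sub_add_cancel ha, Nat.sub_add_cancel hb])
  have : a - 1 = b - 1 := by
    rw [← Nat.div_add_mod (a - 1) m, ← Nat.div_add_mod (b - 1) m, hdiv, hmod]
  omega

open Finset

theorem card_le_sq_of_modEq {T L M : ℕ} (hL : L ∣ T) (hM : M ∣ T) (hT : T ∣ L * M)
    {S : Finset (ℕ × ℕ × ℕ × ℕ)} (hS : S ⊆ Icc 1 T ×ˢ Icc 1 T ×ˢ Icc 1 T ×ˢ Icc 1 T)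
    (hdet : ∀ ⦃i j k l j' k' l' : ℕ⦄, (i, j, k, l) ∈ S → (i, j', k', l') ∈ S →
      k ≡ k' [MOD L] ∧ (k = k' → j ≡ j' [MOD M]) ∧ (j = j' → k = k' → l ≡ l' [MOD T])) :
    #S ≤ T ^ 2 := by
  rcases Nat.eq_zero_or_pos T with rfl | hTpos
  · simp [subset_empty.mp (by simpa using hS)]
  have hLpos := Nat.pos_of_dvd_of_pos hL hTpos
  have hMpos := Nat.pos_of_dvd_of_pos hM hTpos
  calc #S ≤ #(Icc 1 T ×ˢ range (T / L) ×ˢ range (T / M)) := by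
        refine card_le_card_of_injOn (fun q => (q.1, (q.2.2.1 - 1) / L, (q.2.1 - 1) / M)) ?_ ?_
        · rintro ⟨i, j, k, l⟩ hq
          have hq := hS hq
          simp only [mem_product, mem_Icc] at hq
          simp only [coe_product, Set.mem_prod, mem_coe, mem_Icc, mem_range]
          exact ⟨hq.1, Nat.div_lt_div_of_lt_of_dvd hL (by omega),
            Nat.div_lt_div_of_lt_of_dvd hM (by omega)⟩
        · rintro ⟨i, j, k, l⟩ hq ⟨i', j', k', l'⟩ hq' hqq'
          simp only [Prod.mk.injEq] at hqq'
          obtain ⟨rfl, hk, hj⟩ := hqq'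
          have hb := hS hq
          have hb' := hS hq'
          simp only [mem_product, mem_Icc] at hb hb'
          obtain ⟨hkL, hjM, hlT⟩ := hdet hq hq'
          obtain rfl : k = k' := Nat.eq_of_modEq_of_sub_one_div_eq (by omega) (by omega) hkL hk
          obtain rfl : j = j' :=
            Nat.eq_of_modEq_of_sub_one_div_eq (by omega) (by omega) (hjM rfl) hj
          obtain rfl : l = l' := Nat.eq_of_modEq_of_sub_one_div_eq (by omega) (by omega)
            (hlT rfl rfl) (by rw [Nat.div_eq_of_lt (by omega), Nat.div_eq_of_lt (by omega)])
          rfl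
    _ = T * (T / L * (T / M)) := by simp
    _ ≤ T * T := Nat.mul_le_mul_left _ (Nat.div_mul_div_le_of_dvd_mul hL hM hT)
    _ = T ^ 2 := (sq T).symm

theorem card_le_sq_of_vanishingPattern {ι : Type*} [Fintype ι] {G : ι → Type*}
    [∀ p, Group (G p)] [∀ p, HasDistribNeg (G p)] (g : ∀ p, G p) (σ : ι → Fin 3) {T : ℕ}
    (hT : T = univ.lcm fun p => orderOf (g p)) {S : Finset (ℕ × ℕ × ℕ × ℕ)}
    (hS : S ⊆ Icc 1 T ×ˢ Icc 1 T ×ˢ Icc 1 T ×ˢ Icc 1 T)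
    (hσ : ∀ q ∈ S, ∀ p, VanishingPattern (g p) q.1 q.2.1 q.2.2.1 q.2.2.2 (σ p)) :
    #S ≤ T ^ 2 := by
  subst hT
  have hmodEq (P : Finset ι) {a b : ℕ} (h : ∀ p ∈ P, g p ^ a = g p ^ b) :
      a ≡ b [MOD P.lcm fun p => orderOf (g p)] :=
    Nat.modEq_finset_lcm_iff.mpr fun p hp => pow_eq_pow_iff_modEq.mp (h p hp)
  refine card_le_sq_of_modEq (lcm_mono (filter_subset (σ · = 2) univ))
    (lcm_mono (filter_subset (σ · ≠ 2) univ)) (lcm_dvd fun p _ => ?_) hS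
    fun i j k l j' k' l' hq hq' => ?_
  · by_cases hp : σ p = 2
    · exact dvd_mul_of_dvd_left (dvd_lcm (mem_filter.mpr ⟨mem_univ p, hp⟩)) _
    · exact dvd_mul_of_dvd_right (dvd_lcm (mem_filter.mpr ⟨mem_univ p, hp⟩)) _
  · have hpow p := (hσ _ hq p).pow_eq_pow (hσ _ hq' p)
    exact ⟨hmodEq _ fun p hp => (hpow p).1 (mem_filter.mp hp).2,
      fun hk => hmodEq _ fun p hp => (hpow p).2.1 hk (mem_filter.mp hp).2,
      fun hj hk => hmodEq _ fun p _ => (hpow p).2.2 hj hk⟩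

theorem Finset.card_le_pow_mul_of_forall_exists {α ι : Type*} [Fintype ι] (Q : Finset α) {k B : ℕ}
    (R : α → ι → Fin k → Prop) (hR : ∀ q ∈ Q, ∀ p, ∃ t, R q p t)
    (hB : ∀ σ : ι → Fin k, ∀ S ⊆ Q, (∀ q ∈ S, ∀ p, R q p (σ p)) → #S ≤ B) :
    #Q ≤ k ^ Fintype.card ι * B := by
  classical
  calc #Q ≤ #(univ.biUnion fun σ : ι → Fin k => Q.filter fun q => ∀ p, R q p (σ p)) := by
        refine card_le_card fun q hq => mem_biUnion.mpr ?_
        choose σ hσ using hR q hq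
        exact ⟨σ, mem_univ _, mem_filter.mpr ⟨hq, hσ⟩⟩
    _ ≤ ∑ σ : ι → Fin k, #(Q.filter fun q => ∀ p, R q p (σ p)) := card_biUnion_le
    _ ≤ ∑ _σ : ι → Fin k, B :=
        sum_le_sum fun σ _ => hB σ _ (filter_subset _ _) fun q hq => (mem_filter.mp hq).2
    _ = k ^ Fintype.card ι * B := by simp

theorem count_squarefree_coprime_general
    (A : Matrix (Fin 2) (Fin 2) ℤ) (hA : A.det = 1)
    (n : Fin 2 → ℤ) (N : ℕ) (hsqf : Squarefree N)
    (hcop : Nat.Coprime N (4 * (A.trace ^ 2 - 4)).natAbs)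
    (hind : ∀ p : ℕ, p.Prime → p ∣ N → LinearIndependent (ZMod p)
      ![fun i => ((n i : ZMod p)), fun i => (((Matrix.vecMul n A i : ℤ) : ZMod p))]) :
    nu A N n ≤ 3 ^ N.primeFactors.card * (matOrd A N) ^ 2 := by
  classical
  obtain ⟨γ, rfl⟩ : ∃ γ : SpecialLinearGroup (Fin 2) ℤ, γ.1 = A := ⟨⟨A, hA⟩, rfl⟩
  set T := matOrd γ N with hT
  set Q := (Icc 1 T ×ˢ Icc 1 T ×ˢ Icc 1 T ×ˢ Icc 1 T).filter
    fun q => ∀ m, (N : ℤ) ∣ (n ᵥ* (γ.1 ^ q.1 - γ.1 ^ q.2.1 + γ.1 ^ q.2.2.1 - γ.1 ^ q.2.2.2)) m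
  have hnu : nu γ N n = #Q := by
    rw [nu, ← Set.ncard_coe_finset]
    congr 1
    ext q
    simp [Q, hT, and_assoc]
  rw [hnu, ← Fintype.card_coe N.primeFactors]
  refine Q.card_le_pow_mul_of_forall_exists
    (fun q (p : N.primeFactors) => VanishingPattern (reduceMod p γ) q.1 q.2.1 q.2.2.1 q.2.2.2)
    (fun q hq p => ?_) fun σ S hSQ hS => card_le_sq_of_vanishingPattern _ σ
      (by rw [hT, matOrd_eq_orderOf, orderOf_reduceMod_eq_lcm hsqf])
      (hSQ.trans (filter_subset _ _)) hS
  have hp := Nat.prime_of_mem_primeFactors p.2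
  have hpN := Nat.dvd_of_mem_primeFactors p.2
  have := Fact.mk hp
  have hdisc : ¬ (p : ℤ) ∣ γ.1.trace ^ 2 - 4 := fun hdvd =>
    hp.coprime_iff_not_dvd.mp (hcop.coprime_dvd_left hpN) (Int.natCast_dvd.mp (hdvd.mul_left 4))
  exact exists_vanishingPattern_reduceMod hdisc (hind p hp hpN)
    fun m => (Int.natCast_dvd_natCast.mpr hpN).trans ((mem_filter.mp hq).2 m)

/-- Counting lemma, squarefree modulus coprime to `D_A = 4(tr(A)² - 4)`:
if `n` and `nA` are independent mod every prime `p ∣ N`, the number of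
solutions of `n(A^i - A^j + A^k - A^l) ≡ 0 (mod N)`, `1 ≤ i,j,k,l ≤ ord(A,N)`,
is at most `3^{ω(N)} ord(A,N)²`. -/
theorem count_squarefree_coprime
    (A : Matrix (Fin 2) (Fin 2) ℤ) (hA : A.det = 1) (htr : 2 < |A.trace|)
    (n : Fin 2 → ℤ) (N : ℕ) (hsqf : Squarefree N)
    (hcop : Nat.Coprime N (4 * (A.trace ^ 2 - 4)).natAbs)
    (hind : ∀ p : ℕ, p.Prime → p ∣ N → LinearIndependent (ZMod p)
      ![fun i => ((n i : ZMod p)), fun i => (((Matrix.vecMul n A i : ℤ) : ZMod p))]) :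
    nu A N n ≤ 3 ^ N.primeFactors.card * (matOrd A N) ^ 2 :=
  count_squarefree_coprime_general A hA n N hsqf hcop hind
end

section
/- Let m_1, …, m_k and n_1, …, n_k be positive integers with m_j dividing n_j for each 1 ≤ j ≤ k. Then (∏_{j=1}^k m_j)/lcm(m_1,…,m_k) divides (∏_{j=1}^k n_j)/lcm(n_1,…,n_k). (Both of these quotients are positive integers.) -/
open Finset

lemma key_id (m0 a L : ℕ) (hm0 : 0 < m0) (hL : 0 < L) (hdvd : L ∣ a) :
    (m0 * a) / Nat.lcm m0 L = Nat.gcd m0 L * (a / L) := by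
  obtain ⟨c, rfl⟩ := hdvd
  have hlcm : 0 < Nat.lcm m0 L := Nat.pos_of_ne_zero (Nat.lcm_ne_zero hm0.ne' hL.ne')
  rw [Nat.mul_div_cancel_left _ hL]
  have : m0 * (L * c) = Nat.gcd m0 L * c * Nat.lcm m0 L := by
    calc m0 * (L * c) = m0 * L * c := by ring
    _ = Nat.gcd m0 L * Nat.lcm m0 L * c := by rw [Nat.gcd_mul_lcm]
    _ = Nat.gcd m0 L * c * Nat.lcm m0 L := by ring
  rw [this, Nat.mul_div_cancel _ hlcm]

lemma aux {ι : Type*} [DecidableEq ι] (s : Finset ι) (m n : ι → ℕ)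
    (hm : ∀ j ∈ s, 0 < m j) (hn : ∀ j ∈ s, 0 < n j) (hdvd : ∀ j ∈ s, m j ∣ n j) :
    (∏ j ∈ s, m j) / s.lcm m ∣ (∏ j ∈ s, n j) / s.lcm n := by
  induction s using Finset.cons_induction with
  | empty => simp
  | cons a s ha ih =>
    have hLm : 0 < s.lcm m := by
      rcases Nat.eq_zero_or_pos (s.lcm m) with h | h
      · rw [Finset.lcm_eq_zero_iff] at h
        obtain ⟨j, hj, hj0⟩ := h
        exact absurd hj0 (hm j (Finset.mem_cons_of_mem hj)).ne'
      · exact h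
    have hLn : 0 < s.lcm n := by
      rcases Nat.eq_zero_or_pos (s.lcm n) with h | h
      · rw [Finset.lcm_eq_zero_iff] at h
        obtain ⟨j, hj, hj0⟩ := h
        exact absurd hj0 (hn j (Finset.mem_cons_of_mem hj)).ne'
      · exact h
    have hdm : s.lcm m ∣ ∏ j ∈ s, m j :=
      Finset.lcm_dvd fun j hj => Finset.dvd_prod_of_mem m hj
    have hdn : s.lcm n ∣ ∏ j ∈ s, n j :=
      Finset.lcm_dvd fun j hj => Finset.dvd_prod_of_mem n hj
    rw [Finset.prod_cons, Finset.prod_cons, Finset.cons_eq_insert, Finset.lcm_insert, Finset.lcm_insert]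
    have e1 := key_id (m a) (∏ j ∈ s, m j) (s.lcm m)
      (hm a (Finset.mem_cons_self a s)) hLm hdm
    have e2 := key_id (n a) (∏ j ∈ s, n j) (s.lcm n)
      (hn a (Finset.mem_cons_self a s)) hLn hdn
    have g1 : GCDMonoid.lcm (m a) (s.lcm m) = Nat.lcm (m a) (s.lcm m) := lcm_eq_nat_lcm _ _
    have g2 : GCDMonoid.lcm (n a) (s.lcm n) = Nat.lcm (n a) (s.lcm n) := lcm_eq_nat_lcm _ _
    rw [g1, g2, e1, e2]
    have hL : s.lcm m ∣ s.lcm n := Finset.lcm_dvd fun j hj =>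
      (hdvd j (Finset.mem_cons_of_mem hj)).trans (Finset.dvd_lcm hj)
    exact mul_dvd_mul
      (Nat.dvd_gcd ((Nat.gcd_dvd_left _ _).trans (hdvd a (Finset.mem_cons_self a s)))
        ((Nat.gcd_dvd_right _ _).trans hL))
      (ih (fun j hj => hm j (Finset.mem_cons_of_mem hj))
          (fun j hj => hn j (Finset.mem_cons_of_mem hj))
          (fun j hj => hdvd j (Finset.mem_cons_of_mem hj)))

/-- If `m_j ∣ n_j` for each `j`, then `(∏ m_j)/lcm(m_j)` divides
`(∏ n_j)/lcm(n_j)`. -/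
theorem prod_div_lcm_dvd (k : ℕ) (m n : Fin k → ℕ)
    (hm : ∀ j, 0 < m j) (hn : ∀ j, 0 < n j) (hdvd : ∀ j, m j ∣ n j) :
    (∏ j, m j) / Finset.univ.lcm m ∣ (∏ j, n j) / Finset.univ.lcm n := by
  exact aux Finset.univ m n (fun j _ => hm j) (fun j _ => hn j) (fun j _ => hdvd j)
end

section
/- For every ε > 0 there is an x₀ such that for all x ≥ x₀, the number of integers N ≤ x with L(N) > exp(3·(log log x)⁴) is at most ε·x. -/
open Matrix Finset

/-- The squarefree part `d` of `N = d·s²`, where `s²` is the largest square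
dividing `N`. -/
noncomputable def sqfPart (N : ℕ) : ℕ :=
  ∏ p ∈ N.primeFactors, p ^ (N.factorization p % 2)

/-- `d₀(N) = d / gcd(d, D_A)` where `N = d·s²` with `d` squarefree and
`D_A = 4(tr(A)² - 4)`. -/
noncomputable def dZero (A : Matrix (Fin 2) (Fin 2) ℤ) (N : ℕ) : ℕ :=
  sqfPart N / Nat.gcd (sqfPart N) (4 * (A.trace ^ 2 - 4)).natAbs

open Classical in
/-- `χ(p) = 1` if `tr(A)² - 4` is a nonzero square mod `p`, `-1` otherwise. -/
noncomputable def chi (A : Matrix (Fin 2) (Fin 2) ℤ) (p : ℕ) : ℤ :=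
  if ((A.trace ^ 2 - 4 : ℤ) : ZMod p) ≠ 0 ∧ IsSquare ((A.trace ^ 2 - 4 : ℤ) : ZMod p)
  then 1 else -1

/-- `L(N) = (∏_{p ∣ d₀(N)} (p - χ(p))) / lcm{p - χ(p) : p ∣ d₀(N)}`. -/
noncomputable def LN (A : Matrix (Fin 2) (Fin 2) ℤ) (N : ℕ) : ℕ :=
  (∏ p ∈ (dZero A N).primeFactors, ((p : ℤ) - chi A p).natAbs) /
    (dZero A N).primeFactors.lcm (fun p => ((p : ℤ) - chi A p).natAbs)

/-! ### Auxiliary lemmas -/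

section Aux

set_option linter.unnecessarySeqFocus false

lemma aux_prod_div_lcm_dvd (S : Finset ℕ) (f : ℕ → ℕ) (hf : ∀ i ∈ S, f i ≠ 0) :
    (∏ i ∈ S, f i) / S.lcm f ∣
      ∏ q ∈ (S ×ˢ S).filter (fun q => q.1 < q.2), Nat.gcd (f q.1) (f q.2) := by
  rcases S.eq_empty_or_nonempty with rfl | hS
  · simp
  set pairs := (S ×ˢ S).filter (fun q => q.1 < q.2) with hpairs
  have hpq : ∀ q ∈ pairs, Nat.gcd (f q.1) (f q.2) ≠ 0 := by
    rintro ⟨a, b⟩ hab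
    simp only [hpairs, Finset.mem_filter, Finset.mem_product] at hab
    exact Nat.gcd_ne_zero_left (hf a hab.1.1)
  have hlcm_dvd : S.lcm f ∣ ∏ i ∈ S, f i :=
    Finset.lcm_dvd fun i hi => Finset.dvd_prod_of_mem f hi
  have hP0 : (∏ i ∈ S, f i) ≠ 0 := Finset.prod_ne_zero_iff.mpr hf
  have hL0 : S.lcm f ≠ 0 := fun h => hP0 (by simpa [h] using hlcm_dvd)
  have hq0 : (∏ i ∈ S, f i) / S.lcm f ≠ 0 := by
    have := Nat.div_pos (Nat.le_of_dvd (Nat.pos_of_ne_zero hP0) hlcm_dvd)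
      (Nat.pos_of_ne_zero hL0)
    omega
  have hR0 : (∏ q ∈ pairs, Nat.gcd (f q.1) (f q.2)) ≠ 0 := Finset.prod_ne_zero_iff.mpr hpq
  rw [← Nat.factorization_le_iff_dvd hq0 hR0, Finsupp.le_def]
  intro r
  obtain ⟨i0, hi0, hmax⟩ := S.exists_max_image (fun i => (f i).factorization r) hS
  have hvL : (f i0).factorization r ≤ (S.lcm f).factorization r :=
    ((Nat.factorization_le_iff_dvd (hf i0 hi0) hL0).mpr (Finset.dvd_lcm hi0)) r
  have hdiv : ((∏ i ∈ S, f i) / S.lcm f).factorization r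
      = (∏ i ∈ S, f i).factorization r - (S.lcm f).factorization r := by
    rw [Nat.factorization_div hlcm_dvd]; rfl
  have hvP : (∏ i ∈ S, f i).factorization r = ∑ i ∈ S, (f i).factorization r := by
    rw [Nat.factorization_prod hf]; simp [Finset.sum_apply']
  have hRfac : ∑ q ∈ pairs, (Nat.gcd (f q.1) (f q.2)).factorization r
      ≤ (∏ q ∈ pairs, Nat.gcd (f q.1) (f q.2)).factorization r := by
    rw [Nat.factorization_prod hpq]; simp [Finset.sum_apply']
  have key : ∑ i ∈ S.erase i0, (f i).factorization r
      ≤ ∑ q ∈ pairs, (Nat.gcd (f q.1) (f q.2)).factorization r := by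
    set φ : ℕ → ℕ × ℕ := fun i => if i < i0 then (i, i0) else (i0, i) with hφ
    have hmap : ∀ i ∈ S.erase i0, φ i ∈ pairs := by
      intro i hi
      obtain ⟨hne, hiS⟩ := Finset.mem_erase.mp hi
      simp only [hφ, hpairs, Finset.mem_filter, Finset.mem_product]
      by_cases h : i < i0 <;> simp [h, hiS, hi0] <;> omega
    have hval : ∀ i ∈ S.erase i0,
        (Nat.gcd (f (φ i).1) (f (φ i).2)).factorization r = (f i).factorization r := by
      intro i hi
      obtain ⟨hne, hiS⟩ := Finset.mem_erase.mp hi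
      by_cases h : i < i0
      · simp only [hφ, if_pos h]
        rw [Nat.factorization_gcd (hf i hiS) (hf i0 hi0)]
        exact min_eq_left (hmax i hiS)
      · simp only [hφ, if_neg h]
        rw [Nat.factorization_gcd (hf i0 hi0) (hf i hiS)]
        exact min_eq_right (hmax i hiS)
    have hinj : ∀ a ∈ S.erase i0, ∀ b ∈ S.erase i0, φ a = φ b → a = b := by
      intro a ha b hb h
      obtain ⟨hna, -⟩ := Finset.mem_erase.mp ha
      obtain ⟨hnb, -⟩ := Finset.mem_erase.mp hb
      simp only [hφ] at h
      by_cases h1 : a < i0 <;> by_cases h2 : b < i0 <;>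
        simp only [if_pos, if_neg, h1, h2, ite_true, ite_false, Prod.mk.injEq] at h <;> omega
    calc ∑ i ∈ S.erase i0, (f i).factorization r
        = ∑ i ∈ S.erase i0, (Nat.gcd (f (φ i).1) (f (φ i).2)).factorization r :=
          (Finset.sum_congr rfl hval).symm
      _ = ∑ q ∈ (S.erase i0).image φ, (Nat.gcd (f q.1) (f q.2)).factorization r :=
          (Finset.sum_image
            (f := fun q : ℕ × ℕ => (Nat.gcd (f q.1) (f q.2)).factorization r) hinj).symm
      _ ≤ ∑ q ∈ pairs, (Nat.gcd (f q.1) (f q.2)).factorization r :=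
          Finset.sum_le_sum_of_subset (Finset.image_subset_iff.mpr hmap)
  have hse : ∑ i ∈ S.erase i0, (f i).factorization r + (f i0).factorization r
      = ∑ i ∈ S, (f i).factorization r := Finset.sum_erase_add S _ hi0
  omega

lemma aux_sum_inv_Icc_le (X : ℕ) : ∑ d ∈ Icc 1 X, (d : ℝ)⁻¹ ≤ 1 + Real.log X := by
  have h := harmonic_le_one_add_log X
  have h2 : ((harmonic X : ℚ) : ℝ) = ∑ d ∈ Icc 1 X, (d : ℝ)⁻¹ := by
    rw [harmonic_eq_sum_Icc]; push_cast; rfl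
  linarith

lemma aux_sum_card_divisors_le (X : ℕ) :
    (∑ N ∈ Icc 1 X, (N.divisors.card : ℝ)) ≤ X * (1 + Real.log X) := by
  have h1 : ∀ N ∈ Icc 1 X, N.divisors = (Icc 1 X).filter (· ∣ N) := by
    intro N hN
    rw [mem_Icc] at hN
    ext d
    simp only [Nat.mem_divisors, mem_filter, mem_Icc]
    constructor
    · rintro ⟨hd, hN0⟩
      have h1 : 1 ≤ d := Nat.pos_of_dvd_of_pos hd (by omega)
      have h2 : d ≤ N := Nat.le_of_dvd (by omega) hd
      exact ⟨⟨h1, h2.trans hN.2⟩, hd⟩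
    · rintro ⟨-, hd⟩; exact ⟨hd, by omega⟩
  have h2 : ∑ N ∈ Icc 1 X, N.divisors.card = ∑ d ∈ Icc 1 X, X / d := by
    calc ∑ N ∈ Icc 1 X, N.divisors.card
        = ∑ N ∈ Icc 1 X, ((Icc 1 X).filter (· ∣ N)).card :=
          Finset.sum_congr rfl fun N hN => by rw [h1 N hN]
      _ = ∑ N ∈ Icc 1 X, ∑ d ∈ Icc 1 X, if d ∣ N then 1 else 0 := by
          refine Finset.sum_congr rfl fun N hN => ?_
          rw [Finset.card_filter]
      _ = ∑ d ∈ Icc 1 X, ∑ N ∈ Icc 1 X, if d ∣ N then 1 else 0 := Finset.sum_comm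
      _ = ∑ d ∈ Icc 1 X, ((Icc 1 X).filter (d ∣ ·)).card := by
          refine Finset.sum_congr rfl fun d hd => ?_
          rw [Finset.card_filter]
      _ = ∑ d ∈ Icc 1 X, X / d := by
          refine Finset.sum_congr rfl fun d hd => ?_
          rw [show Icc 1 X = Ioc 0 X from rfl, Nat.Ioc_filter_dvd_card_eq_div]
  calc (∑ N ∈ Icc 1 X, (N.divisors.card : ℝ))
      = ((∑ N ∈ Icc 1 X, N.divisors.card : ℕ) : ℝ) := by push_cast; rfl
    _ = ((∑ d ∈ Icc 1 X, X / d : ℕ) : ℝ) := by rw [h2]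
    _ = ∑ d ∈ Icc 1 X, ((X / d : ℕ) : ℝ) := by push_cast; rfl
    _ ≤ ∑ d ∈ Icc 1 X, (X : ℝ) * (d : ℝ)⁻¹ := by
        refine Finset.sum_le_sum fun d hd => ?_
        rw [mul_comm, ← div_eq_inv_mul]
        exact Nat.cast_div_le
    _ = (X : ℝ) * ∑ d ∈ Icc 1 X, (d : ℝ)⁻¹ := by rw [Finset.mul_sum]
    _ ≤ X * (1 + Real.log X) := by
        have := aux_sum_inv_Icc_le X
        have hX : (0:ℝ) ≤ X := Nat.cast_nonneg X
        nlinarith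

lemma aux_two_pow_card_primeFactors_le (N : ℕ) (hN : N ≠ 0) :
    2 ^ N.primeFactors.card ≤ N.divisors.card := by
  rw [Nat.card_divisors hN]
  calc 2 ^ N.primeFactors.card = ∏ _p ∈ N.primeFactors, 2 := by rw [Finset.prod_const]
    _ ≤ ∏ p ∈ N.primeFactors, (N.factorization p + 1) := by
        refine Finset.prod_le_prod' fun p hp => ?_
        have := Nat.Prime.factorization_pos_of_dvd (Nat.prime_of_mem_primeFactors hp) hN
          (Nat.dvd_of_mem_primeFactors hp)
        omega

lemma chi_cases (A : Matrix (Fin 2) (Fin 2) ℤ) (p : ℕ) : chi A p = 1 ∨ chi A p = -1 := by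
  unfold chi; split <;> simp

lemma m_cases (A : Matrix (Fin 2) (Fin 2) ℤ) {p : ℕ} (hp : 2 ≤ p) :
    ((p : ℤ) - chi A p).natAbs = p - 1 ∨ ((p : ℤ) - chi A p).natAbs = p + 1 := by
  rcases chi_cases A p with h | h <;> rw [h] <;> [left; right] <;> omega

lemma m_ne_zero (A : Matrix (Fin 2) (Fin 2) ℤ) {p : ℕ} (hp : 2 ≤ p) :
    ((p : ℤ) - chi A p).natAbs ≠ 0 := by
  rcases m_cases A hp with h | h <;> omega

lemma m_le (A : Matrix (Fin 2) (Fin 2) ℤ) {p : ℕ} (hp : 2 ≤ p) :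
    ((p : ℤ) - chi A p).natAbs ≤ p + 1 := by
  rcases m_cases A hp with h | h <;> omega

lemma sqfPart_dvd (N : ℕ) (h : N ≠ 0) : sqfPart N ∣ N := by
  have h2 : ∏ p ∈ N.primeFactors, p ^ N.factorization p = N :=
    Nat.factorization_prod_pow_eq_self h
  have hdvd : sqfPart N ∣ ∏ p ∈ N.primeFactors, p ^ N.factorization p :=
    Finset.prod_dvd_prod_of_dvd (fun p => p ^ (N.factorization p % 2))
      (fun p => p ^ N.factorization p) (fun p _ => pow_dvd_pow p (Nat.mod_le _ 2))
  rwa [h2] at hdvd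

lemma sqfPart_ne_zero (N : ℕ) : sqfPart N ≠ 0 := by
  refine Finset.prod_ne_zero_iff.mpr fun p hp => ?_
  exact pow_ne_zero _ (Nat.Prime.ne_zero (Nat.prime_of_mem_primeFactors hp))

lemma dZero_dvd (A : Matrix (Fin 2) (Fin 2) ℤ) (N : ℕ) (h : N ≠ 0) : dZero A N ∣ N :=
  (Nat.div_dvd_of_dvd (Nat.gcd_dvd_left _ _)).trans (sqfPart_dvd N h)

lemma LN_le_pow (A : Matrix (Fin 2) (Fin 2) ℤ) (N : ℕ) (hN : N ≠ 0) (G W : ℕ) (hG : 1 ≤ G)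
    (hW : N.primeFactors.card ≤ W)
    (hpairs : ∀ p ∈ N.primeFactors, ∀ p' ∈ N.primeFactors, p < p' →
      Nat.gcd ((p : ℤ) - chi A p).natAbs (((p' : ℤ) - chi A p').natAbs) ≤ G) :
    LN A N ≤ G ^ (W * W) := by
  set S := (dZero A N).primeFactors with hS
  have hSN : S ⊆ N.primeFactors := Nat.primeFactors_mono (dZero_dvd A N hN) hN
  set f : ℕ → ℕ := fun p => ((p : ℤ) - chi A p).natAbs with hfdef
  have hf : ∀ p ∈ S, f p ≠ 0 := fun p hp =>
    m_ne_zero A (Nat.prime_of_mem_primeFactors hp).two_le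
  have hdvd := aux_prod_div_lcm_dvd S f hf
  set pairs := (S ×ˢ S).filter (fun q => q.1 < q.2) with hpdef
  have hRpos : 0 < ∏ q ∈ pairs, Nat.gcd (f q.1) (f q.2) := by
    refine Finset.prod_pos ?_
    rintro ⟨a, b⟩ hab
    simp only [hpdef, Finset.mem_filter, Finset.mem_product] at hab
    exact Nat.pos_of_ne_zero (Nat.gcd_ne_zero_left (hf a hab.1.1))
  have h1 : LN A N ≤ ∏ q ∈ pairs, Nat.gcd (f q.1) (f q.2) := Nat.le_of_dvd hRpos hdvd
  have h2 : ∏ q ∈ pairs, Nat.gcd (f q.1) (f q.2) ≤ G ^ pairs.card := by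
    refine Finset.prod_le_pow_card _ _ _ ?_
    rintro ⟨a, b⟩ hab
    simp only [hpdef, Finset.mem_filter, Finset.mem_product] at hab
    exact hpairs a (hSN hab.1.1) b (hSN hab.1.2) hab.2
  have h3 : pairs.card ≤ W * W := by
    calc pairs.card ≤ (S ×ˢ S).card := Finset.card_filter_le _ _
      _ = S.card * S.card := Finset.card_product _ _
      _ ≤ W * W := Nat.mul_le_mul ((Finset.card_le_card hSN).trans hW)
          ((Finset.card_le_card hSN).trans hW)
  exact h1.trans (h2.trans (Nat.pow_le_pow_right hG h3))

lemma aux_sum_inv_sq_le (a M : ℕ) (ha : 1 ≤ a) :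
    ∑ d ∈ Icc (a + 1) M, ((d : ℝ) * d)⁻¹ ≤ (a : ℝ)⁻¹ := by
  have key : ∀ M : ℕ, a ≤ M →
      ∑ d ∈ Icc (a + 1) M, ((d : ℝ) * d)⁻¹ ≤ (a : ℝ)⁻¹ - (M : ℝ)⁻¹ := by
    intro M hM
    induction M, hM using Nat.le_induction with
    | base =>
        rw [Finset.Icc_eq_empty (by omega)]
        simp
    | succ M hM ih =>
        rw [Finset.sum_Icc_succ_top (by omega : a + 1 ≤ M + 1)]
        have hM0 : (0:ℝ) < M := by
          have h1 : 1 ≤ M := le_trans ha hM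
          exact_mod_cast Nat.lt_of_lt_of_le Nat.zero_lt_one h1
        have hM1 : (0:ℝ) < (M:ℝ) + 1 := by linarith
        have hstep : (((M:ℝ) + 1) * ((M:ℝ) + 1))⁻¹ ≤ (M:ℝ)⁻¹ - ((M:ℝ) + 1)⁻¹ := by
          rw [inv_sub_inv (ne_of_gt hM0) (ne_of_gt hM1), inv_eq_one_div,
            div_le_div_iff₀ (by positivity) (by positivity)]
          nlinarith
        push_cast at ih ⊢
        linarith
  by_cases hM : a ≤ M
  · have h := key M hM
    have hMpos : (0:ℝ) ≤ (M:ℝ)⁻¹ := by positivity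
    linarith
  · rw [Finset.Icc_eq_empty (by omega)]
    simp only [Finset.sum_empty]
    positivity

lemma aux_sum_U_le (X d : ℕ) (hd : 2 ≤ d) (hX : 1 ≤ X) :
    ∑ n ∈ ((Icc 1 X).image (fun k => k * d + 1)) ∪ ((Icc 1 X).image (fun k => k * d - 1)),
        (n : ℝ)⁻¹ ≤ 3 * (d : ℝ)⁻¹ * (1 + Real.log X) := by
  have hd0 : (0:ℝ) < d := by positivity
  have hsum1 : ∑ n ∈ (Icc 1 X).image (fun k => k * d + 1), (n : ℝ)⁻¹
      ≤ ∑ k ∈ Icc 1 X, ((k : ℝ) * d)⁻¹ := by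
    rw [Finset.sum_image (f := fun n : ℕ => (n : ℝ)⁻¹)
      (fun a _ b _ h => by
        have hd1 : 0 < d := by omega
        exact Nat.eq_of_mul_eq_mul_right hd1 (by omega))]
    refine Finset.sum_le_sum fun k hk => ?_
    have hk1 : 1 ≤ k := (mem_Icc.mp hk).1
    have hkd : (0:ℝ) < (k:ℝ) * d := by positivity
    rw [inv_le_inv₀ (by positivity) hkd]
    push_cast; linarith
  have hsum2 : ∑ n ∈ (Icc 1 X).image (fun k => k * d - 1), (n : ℝ)⁻¹
      ≤ ∑ k ∈ Icc 1 X, 2 * ((k : ℝ) * d)⁻¹ := by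
    rw [Finset.sum_image (f := fun n : ℕ => (n : ℝ)⁻¹)
      (fun a ha b hb h => by
        have ha1 : 1 ≤ a := (mem_Icc.mp ha).1
        have hb1 : 1 ≤ b := (mem_Icc.mp hb).1
        have hu : 1 ≤ a * d := Nat.mul_pos (by omega) (by omega)
        have hv : 1 ≤ b * d := Nat.mul_pos (by omega) (by omega)
        have h4 : a * d = b * d := by omega
        exact Nat.eq_of_mul_eq_mul_right (by omega) h4)]
    refine Finset.sum_le_sum fun k hk => ?_
    have hk1 : 1 ≤ k := (mem_Icc.mp hk).1
    have hkd2 : 2 ≤ k * d := by nlinarith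
    have hcast : ((k * d - 1 : ℕ) : ℝ) = (k : ℝ) * d - 1 := by
      push_cast [Nat.cast_sub (by omega : 1 ≤ k * d)]; ring
    rw [hcast]
    have hkd : (0:ℝ) < (k:ℝ) * d := by positivity
    have hkd2' : (2:ℝ) ≤ (k:ℝ) * d := by exact_mod_cast hkd2
    rw [show 2 * ((k:ℝ) * d)⁻¹ = (((k:ℝ) * d) / 2)⁻¹ by
      rw [inv_div]; ring]
    rw [inv_le_inv₀ (by linarith) (by linarith)]
    linarith
  have hunion : ∑ n ∈ ((Icc 1 X).image (fun k => k * d + 1)) ∪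
        ((Icc 1 X).image (fun k => k * d - 1)), (n : ℝ)⁻¹
      ≤ ∑ n ∈ (Icc 1 X).image (fun k => k * d + 1), (n : ℝ)⁻¹
        + ∑ n ∈ (Icc 1 X).image (fun k => k * d - 1), (n : ℝ)⁻¹ := by
    have h := Finset.sum_union_inter (s₁ := (Icc 1 X).image (fun k => k * d + 1))
      (s₂ := (Icc 1 X).image (fun k => k * d - 1)) (f := fun n : ℕ => (n : ℝ)⁻¹)
    have h2 : (0:ℝ) ≤ ∑ n ∈ ((Icc 1 X).image (fun k => k * d + 1)) ∩
        ((Icc 1 X).image (fun k => k * d - 1)), (n : ℝ)⁻¹ :=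
      Finset.sum_nonneg fun n _ => by positivity
    linarith
  have hfinal : ∑ k ∈ Icc 1 X, ((k : ℝ) * d)⁻¹ + ∑ k ∈ Icc 1 X, 2 * ((k : ℝ) * d)⁻¹
      ≤ 3 * (d : ℝ)⁻¹ * (1 + Real.log X) := by
    have he : ∑ k ∈ Icc 1 X, ((k : ℝ) * d)⁻¹ = (d : ℝ)⁻¹ * ∑ k ∈ Icc 1 X, (k : ℝ)⁻¹ := by
      rw [Finset.mul_sum]
      refine Finset.sum_congr rfl fun k _ => ?_
      rw [mul_inv]; ring
    have hH := aux_sum_inv_Icc_le X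
    have hdinv : (0:ℝ) ≤ (d : ℝ)⁻¹ := by positivity
    rw [he, ← Finset.mul_sum, he]
    nlinarith
  calc _ ≤ _ := hunion
    _ ≤ ∑ k ∈ Icc 1 X, ((k : ℝ) * d)⁻¹ + ∑ k ∈ Icc 1 X, 2 * ((k : ℝ) * d)⁻¹ :=
        add_le_add hsum1 hsum2
    _ ≤ _ := hfinal

end Aux

set_option maxHeartbeats 2000000 in
/-- For all but `o(x)` of the integers `N ≤ x`, `L(N) ≤ exp(3 (log log x)⁴)`. -/
theorem LN_small_for_most
    (A : Matrix (Fin 2) (Fin 2) ℤ) (hA : A.det = 1) (htr : 2 < |A.trace|) :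
    ∀ ε : ℝ, 0 < ε → ∃ x₀ : ℝ, ∀ x : ℝ, x₀ ≤ x →
      ({N : ℕ | 1 ≤ N ∧ (N : ℝ) ≤ x ∧
          Real.exp (3 * Real.log (Real.log x) ^ 4) < (LN A N : ℝ)}.ncard : ℝ) ≤
        ε * x := by
  classical
  intro ε hε
  have h2ε : (0:ℝ) < 2 / ε := by positivity
  have hcomp : Filter.Tendsto (fun x : ℝ => Real.log (Real.log x)) Filter.atTop Filter.atTop :=
    Real.tendsto_log_atTop.comp Real.tendsto_log_atTop
  have hC4 : ∀ᶠ x : ℝ in Filter.atTop,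
      18 / ε * (1 + Real.log x) ^ 2 ≤ Real.log x ^ 3 - 1 := by
    have hgen : ∀ᶠ t : ℝ in Filter.atTop, 18 / ε * (1 + t) ^ 2 ≤ t ^ 3 - 1 := by
      rw [Filter.eventually_atTop]
      refine ⟨4 * (18 / ε) + 9, fun t ht => ?_⟩
      have hh1 : (0:ℝ) < 18 / ε := by positivity
      have ht9 : (9:ℝ) ≤ t := by linarith
      have hA2 : (1 + t) ^ 2 ≤ 2 * t ^ 2 := by nlinarith
      have hA3 : 2 * (18 / ε) * t ^ 2 + 1 ≤ t ^ 3 := by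
        nlinarith [mul_le_mul_of_nonneg_right ht (sq_nonneg t)]
      nlinarith [sq_nonneg t]
    exact Real.tendsto_log_atTop.eventually hgen
  have hC3 : ∀ᶠ x : ℝ in Filter.atTop,
      Real.log (2 / ε) + Real.log 2 + Real.log (Real.log x) ≤
        Real.sqrt (Real.log (Real.log x) ^ 3) * Real.log 2 := by
    have hgen : ∀ᶠ u : ℝ in Filter.atTop,
        Real.log (2 / ε) + Real.log 2 + u ≤ Real.sqrt (u ^ 3) * Real.log 2 := by
      rw [Filter.eventually_atTop]
      refine ⟨max 9 (Real.log (2 / ε) + Real.log 2), fun u hu => ?_⟩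
      have hu9 : (9:ℝ) ≤ u := le_trans (le_max_left _ _) hu
      have huC : Real.log (2 / ε) + Real.log 2 ≤ u := le_trans (le_max_right _ _) hu
      have hu0 : (0:ℝ) ≤ u := by linarith
      have hs : Real.sqrt (u ^ 3) = u * Real.sqrt u := by
        rw [show u ^ 3 = u ^ 2 * u by ring, Real.sqrt_mul (sq_nonneg u), Real.sqrt_sq hu0]
      have hsq : (3:ℝ) ≤ Real.sqrt u := by
        have hq1 := Real.sq_sqrt hu0
        have hq2 := Real.sqrt_nonneg u
        nlinarith
      have hl2 : (0.6931471803:ℝ) < Real.log 2 := Real.log_two_gt_d9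
      rw [hs]
      have k1 : (0:ℝ) ≤ u * Real.log 2 * (Real.sqrt u - 3) := by
        apply mul_nonneg (mul_nonneg hu0 (by linarith)) (by linarith)
      nlinarith
    exact hcomp.eventually hgen
  have hC2 : ∀ᶠ x : ℝ in Filter.atTop, 9 ≤ Real.log (Real.log x) :=
    hcomp.eventually (Filter.eventually_ge_atTop 9)
  have hC1 : ∀ᶠ x : ℝ in Filter.atTop, 2 ≤ Real.log x :=
    Real.tendsto_log_atTop.eventually (Filter.eventually_ge_atTop 2)
  have hC0 : ∀ᶠ x : ℝ in Filter.atTop, 3 ≤ x := Filter.eventually_ge_atTop 3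
  have hall := (((hC4.and hC3).and hC2).and hC1).and hC0
  rw [Filter.eventually_atTop] at hall
  obtain ⟨x₀, hx₀⟩ := hall
  refine ⟨x₀, fun x hx => ?_⟩
  obtain ⟨⟨⟨⟨h4, h3⟩, h2⟩, h1⟩, h0⟩ := hx₀ x hx
  have hx0 : (0:ℝ) ≤ x := by linarith
  set ll := Real.log (Real.log x) with hlldef
  have hll : (9:ℝ) ≤ ll := h2
  set X := ⌊x⌋₊ with hXdef
  have hX1 : 1 ≤ X := Nat.le_floor (by push_cast; linarith)
  have hXx : (X : ℝ) ≤ x := Nat.floor_le hx0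
  have hXpos : (0:ℝ) < X := by exact_mod_cast Nat.lt_of_lt_of_le Nat.zero_lt_one hX1
  have hXlog : Real.log X ≤ Real.log x :=
    (Real.log_le_log_iff hXpos (by linarith)).mpr hXx
  have hXlog0 : (0:ℝ) ≤ Real.log X := Real.log_nonneg (by exact_mod_cast hX1)
  set W := ⌊Real.sqrt (ll ^ 3)⌋₊ with hWdef
  set G := ⌊Real.log x ^ 3⌋₊ with hGdef
  have hG1 : 1 ≤ G := Nat.le_floor (by push_cast; nlinarith)
  have hGle : (G:ℝ) ≤ Real.log x ^ 3 := Nat.floor_le (by positivity)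
  have hGgt : Real.log x ^ 3 - 1 < (G:ℝ) := Nat.sub_one_lt_floor _
  have hWle : (W:ℝ) ≤ Real.sqrt (ll ^ 3) := Nat.floor_le (Real.sqrt_nonneg _)
  have hWgt : Real.sqrt (ll ^ 3) < (W:ℝ) + 1 := Nat.lt_floor_add_one _
  set T := Real.exp (3 * ll ^ 4) with hTdef
  set m : ℕ → ℕ := fun p => ((p : ℤ) - chi A p).natAbs with hmdef
  set badF := (Icc 1 X).filter (fun N => T < (LN A N : ℝ)) with hbadF
  have hset : {N : ℕ | 1 ≤ N ∧ (N:ℝ) ≤ x ∧ T < (LN A N : ℝ)} = ↑badF := by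
    ext N
    simp only [hbadF, Finset.coe_filter, Set.mem_setOf_eq, mem_Icc]
    constructor
    · rintro ⟨ha, hb, hc⟩
      exact ⟨⟨ha, Nat.le_floor hb⟩, hc⟩
    · rintro ⟨⟨ha, hb⟩, hc⟩
      refine ⟨ha, le_trans ?_ hXx, hc⟩
      exact_mod_cast Nat.cast_le.mpr hb
  rw [hset, Set.ncard_coe_finset]
  set B1 := (Icc 1 X).filter (fun N => W + 1 ≤ N.primeFactors.card) with hB1def
  set B2 := (Icc 1 X).filter (fun N => ∃ p ∈ N.primeFactors, ∃ q ∈ N.primeFactors,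
      p < q ∧ G + 1 ≤ Nat.gcd (m p) (m q)) with hB2def
  have hsub : badF ⊆ B1 ∪ B2 := by
    intro N hN
    obtain ⟨hNIcc, hT⟩ := Finset.mem_filter.mp hN
    by_contra hc
    rw [Finset.mem_union] at hc
    push_neg at hc
    have hN0 : N ≠ 0 := by have := (Finset.mem_Icc.mp hNIcc).1; omega
    have hω : N.primeFactors.card ≤ W := by
      by_contra hcon
      exact hc.1 (Finset.mem_filter.mpr ⟨hNIcc, by omega⟩)
    have hgcd : ∀ p ∈ N.primeFactors, ∀ q ∈ N.primeFactors, p < q →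
        Nat.gcd (m p) (m q) ≤ G := by
      intro p hp q hq hpq
      by_contra hcon
      exact hc.2 (Finset.mem_filter.mpr ⟨hNIcc, ⟨p, hp, q, hq, hpq, by omega⟩⟩)
    have hLN := LN_le_pow A N hN0 G W (by omega) hω hgcd
    have hreal : (LN A N : ℝ) ≤ (G : ℝ) ^ (W * W) := by
      calc (LN A N : ℝ) ≤ ((G ^ (W * W) : ℕ) : ℝ) := Nat.cast_le.mpr hLN
        _ = (G:ℝ) ^ (W * W) := by push_cast; ring
    have hllpos : (0:ℝ) ≤ ll := by linarith
    have hTge : (G:ℝ) ^ (W * W) ≤ T := by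
      have s1 : (G:ℝ) ^ (W * W) ≤ (Real.log x ^ 3) ^ (W * W) :=
        pow_le_pow_left₀ (Nat.cast_nonneg G) hGle _
      have s2 : (Real.log x ^ 3) ^ (W * W) = Real.exp (((3 * (W * W) : ℕ) : ℝ) * ll) := by
        rw [← pow_mul, ← Real.exp_log (show (0:ℝ) < Real.log x ^ (3 * (W * W)) by positivity),
          Real.log_pow]
      have s3 : ((3 * (W * W) : ℕ) : ℝ) * ll ≤ 3 * ll ^ 4 := by
        have hW2 : ((W:ℝ)) * W ≤ ll ^ 3 := by
          have hsq := Real.sq_sqrt (show (0:ℝ) ≤ ll ^ 3 by positivity)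
          have hsn := Real.sqrt_nonneg (ll ^ 3)
          nlinarith [hWle]
        have k := mul_nonneg hllpos (by linarith [hW2] : (0:ℝ) ≤ ll ^ 3 - (W:ℝ) * W)
        push_cast
        nlinarith [k]
      calc (G:ℝ) ^ (W * W) ≤ (Real.log x ^ 3) ^ (W * W) := s1
        _ = Real.exp _ := s2
        _ ≤ T := Real.exp_le_exp.mpr s3
    linarith
  have hcard : (badF.card : ℝ) ≤ (B1.card : ℝ) + (B2.card : ℝ) := by
    have t1 := Finset.card_le_card hsub
    have t2 := Finset.card_union_le B1 B2
    exact_mod_cast le_trans t1 t2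
  have hB1count : (B1.card : ℝ) ≤ ε / 2 * x := by
    have hnat : B1.card * 2 ^ (W + 1) ≤ ∑ N ∈ Icc 1 X, N.divisors.card := by
      calc B1.card * 2 ^ (W + 1) = ∑ _N ∈ B1, 2 ^ (W + 1) := by
            rw [Finset.sum_const, smul_eq_mul]
        _ ≤ ∑ N ∈ B1, N.divisors.card := by
            refine Finset.sum_le_sum fun N hN => ?_
            obtain ⟨hNIcc, hW1⟩ := Finset.mem_filter.mp hN
            have hN0 : N ≠ 0 := by have := (Finset.mem_Icc.mp hNIcc).1; omega
            calc 2 ^ (W + 1) ≤ 2 ^ N.primeFactors.card := Nat.pow_le_pow_right (by omega) hW1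
              _ ≤ N.divisors.card := aux_two_pow_card_primeFactors_le N hN0
        _ ≤ ∑ N ∈ Icc 1 X, N.divisors.card :=
            Finset.sum_le_sum_of_subset (Finset.filter_subset _ _)
    have hreal1 : (B1.card : ℝ) * 2 ^ (W + 1) ≤ x * (1 + Real.log x) := by
      calc (B1.card : ℝ) * 2 ^ (W + 1) = ((B1.card * 2 ^ (W + 1) : ℕ) : ℝ) := by
            push_cast; ring
        _ ≤ ((∑ N ∈ Icc 1 X, N.divisors.card : ℕ) : ℝ) := Nat.cast_le.mpr hnat
        _ = ∑ N ∈ Icc 1 X, (N.divisors.card : ℝ) := by push_cast; rfl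
        _ ≤ (X:ℝ) * (1 + Real.log X) := aux_sum_card_divisors_le X
        _ ≤ x * (1 + Real.log x) := mul_le_mul hXx (by linarith) (by linarith) hx0
    have h2W : (2 / ε) * (1 + Real.log x) ≤ (2:ℝ) ^ (W + 1) := by
      have hp1 : (0:ℝ) < (2 / ε) * (1 + Real.log x) := by
        apply mul_pos h2ε (by linarith)
      rw [← Real.log_le_log_iff hp1 (by positivity), Real.log_mul (by positivity)
        (by linarith), Real.log_pow]
      have hle1 : Real.log (1 + Real.log x) ≤ Real.log 2 + ll := by
        have hh : (1:ℝ) + Real.log x ≤ 2 * Real.log x := by linarith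
        calc Real.log (1 + Real.log x) ≤ Real.log (2 * Real.log x) :=
              (Real.log_le_log_iff (by linarith) (by linarith)).mpr hh
          _ = Real.log 2 + ll := by rw [Real.log_mul (by norm_num) (by linarith)]
      have hlog2 : (0:ℝ) < Real.log 2 := Real.log_pos (by norm_num)
      have k : Real.sqrt (ll ^ 3) * Real.log 2 ≤ ((W:ℝ) + 1) * Real.log 2 :=
        mul_le_mul_of_nonneg_right (le_of_lt hWgt) hlog2.le
      push_cast
      linarith [h3, hle1, k]
    have hq : (B1.card : ℝ) * ((2 / ε) * (1 + Real.log x)) ≤ x * (1 + Real.log x) :=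
      le_trans (mul_le_mul_of_nonneg_left h2W (Nat.cast_nonneg _)) hreal1
    have h1x : (0:ℝ) < 1 + Real.log x := by linarith
    have hq2 : (B1.card : ℝ) * (2 / ε) ≤ x := by
      have hq' : ((B1.card : ℝ) * (2 / ε)) * (1 + Real.log x) ≤ x * (1 + Real.log x) := by
        calc ((B1.card : ℝ) * (2 / ε)) * (1 + Real.log x)
            = (B1.card : ℝ) * ((2 / ε) * (1 + Real.log x)) := by ring
          _ ≤ x * (1 + Real.log x) := hq
      exact le_of_mul_le_mul_right hq' h1x
    calc (B1.card : ℝ) ≤ x / (2 / ε) := (le_div_iff₀ h2ε).mpr hq2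
      _ = ε / 2 * x := by field_simp
  have hB2count : (B2.card : ℝ) ≤ ε / 2 * x := by
    set P := ((Icc 1 X) ×ˢ (Icc 1 X)).filter
        (fun q : ℕ × ℕ => q.1.Prime ∧ q.2.Prime ∧ q.1 < q.2 ∧
          G + 1 ≤ Nat.gcd (m q.1) (m q.2)) with hPdef
    have hB2sub : B2 ⊆ P.biUnion (fun q => (Icc 1 X).filter (fun N => q.1 * q.2 ∣ N)) := by
      intro N hN
      obtain ⟨hNIcc, p, hp, q, hq, hpq, hgcd⟩ := Finset.mem_filter.mp hN
      have hNpos : 0 < N := (Finset.mem_Icc.mp hNIcc).1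
      have hNX : N ≤ X := (Finset.mem_Icc.mp hNIcc).2
      have hpP := Nat.prime_of_mem_primeFactors hp
      have hqP := Nat.prime_of_mem_primeFactors hq
      have hpN := Nat.dvd_of_mem_primeFactors hp
      have hqN := Nat.dvd_of_mem_primeFactors hq
      refine Finset.mem_biUnion.mpr ⟨(p, q), Finset.mem_filter.mpr ⟨Finset.mem_product.mpr
        ⟨Finset.mem_Icc.mpr ⟨hpP.one_lt.le, (Nat.le_of_dvd hNpos hpN).trans hNX⟩,
         Finset.mem_Icc.mpr ⟨hqP.one_lt.le, (Nat.le_of_dvd hNpos hqN).trans hNX⟩⟩,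
        hpP, hqP, hpq, hgcd⟩, Finset.mem_filter.mpr ⟨hNIcc, ?_⟩⟩
      exact ((Nat.coprime_primes hpP hqP).mpr (Nat.ne_of_lt hpq)).mul_dvd_of_dvd_of_dvd hpN hqN
    have hcard2 : B2.card ≤ ∑ q ∈ P, X / (q.1 * q.2) := by
      calc B2.card ≤ (P.biUnion fun q => (Icc 1 X).filter (fun N => q.1 * q.2 ∣ N)).card :=
            Finset.card_le_card hB2sub
        _ ≤ ∑ q ∈ P, ((Icc 1 X).filter (fun N => q.1 * q.2 ∣ N)).card :=
            Finset.card_biUnion_le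
        _ = ∑ q ∈ P, X / (q.1 * q.2) := Finset.sum_congr rfl fun q _ => by
            rw [show Icc 1 X = Ioc 0 X from rfl]
            exact Nat.Ioc_filter_dvd_card_eq_div X (q.1 * q.2)
    set U : ℕ → Finset ℕ := fun d => ((Icc 1 X).image (fun k => k * d + 1)) ∪
        ((Icc 1 X).image (fun k => k * d - 1)) with hUdef
    have hmemU : ∀ d p : ℕ, 2 ≤ d → p.Prime → p ≤ X → d ∣ m p → p ∈ U d := by
      intro d p hd hp hpX hdvd
      have hp2 := hp.two_le
      rcases m_cases A hp.two_le with hm | hm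
      · rw [hmdef] at hdvd
        simp only at hdvd
        rw [hm] at hdvd
        obtain ⟨k, hk⟩ := hdvd
        rw [mul_comm] at hk
        have hk1 : 1 ≤ k := by
          rcases Nat.eq_zero_or_pos k with rfl | h
          · omega
          · exact h
        have hkX : k ≤ X := by
          have hq1 : k ≤ k * d := Nat.le_mul_of_pos_right k (by omega)
          omega
        exact Finset.mem_union_left _
          (Finset.mem_image.mpr ⟨k, Finset.mem_Icc.mpr ⟨hk1, hkX⟩, by omega⟩)
      · rw [hmdef] at hdvd
        simp only at hdvd
        rw [hm] at hdvd
        obtain ⟨k, hk⟩ := hdvd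
        rw [mul_comm] at hk
        have hk1 : 1 ≤ k := by
          rcases Nat.eq_zero_or_pos k with rfl | h
          · omega
          · exact h
        have hkX : k ≤ X := by
          have hq1 : 2 * k ≤ k * d := by
            calc 2 * k = k * 2 := by ring
              _ ≤ k * d := Nat.mul_le_mul_left k hd
          omega
        exact Finset.mem_union_right _
          (Finset.mem_image.mpr ⟨k, Finset.mem_Icc.mpr ⟨hk1, hkX⟩, by omega⟩)
    have hgcdmem : ∀ q ∈ P, Nat.gcd (m q.1) (m q.2) ∈ Icc (G + 1) (X + 1) := by
      rintro ⟨a, b⟩ hq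
      obtain ⟨hmem, haP, hbP, hab, hG'⟩ := Finset.mem_filter.mp hq
      have haX : a ≤ X := (Finset.mem_Icc.mp (Finset.mem_product.mp hmem).1).2
      have hma : m a ≤ a + 1 := m_le A haP.two_le
      have hma0 : m a ≠ 0 := m_ne_zero A haP.two_le
      have hgle : Nat.gcd (m a) (m b) ≤ m a := Nat.gcd_le_left _ (Nat.pos_of_ne_zero hma0)
      exact Finset.mem_Icc.mpr ⟨hG', le_trans hgle (by omega)⟩
    have hsplit : ∑ q ∈ P, ((q.1:ℝ)⁻¹ * (q.2:ℝ)⁻¹)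
        = ∑ d ∈ Icc (G + 1) (X + 1), ∑ q ∈ P.filter
            (fun q => Nat.gcd (m q.1) (m q.2) = d), ((q.1:ℝ)⁻¹ * (q.2:ℝ)⁻¹) :=
      (Finset.sum_fiberwise_of_maps_to hgcdmem _).symm
    have hinner : ∀ d ∈ Icc (G + 1) (X + 1),
        ∑ q ∈ P.filter (fun q => Nat.gcd (m q.1) (m q.2) = d), ((q.1:ℝ)⁻¹ * (q.2:ℝ)⁻¹)
          ≤ (3 * (d:ℝ)⁻¹ * (1 + Real.log x)) ^ 2 := by
      intro d hd
      have hdIcc := Finset.mem_Icc.mp hd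
      have hd2 : 2 ≤ d := by omega
      have hsubUU : P.filter (fun q => Nat.gcd (m q.1) (m q.2) = d) ⊆ U d ×ˢ U d := by
        rintro ⟨a, b⟩ hq
        obtain ⟨hqP, hgcd⟩ := Finset.mem_filter.mp hq
        obtain ⟨hmem, haP, hbP, hab, hG'⟩ := Finset.mem_filter.mp hqP
        have haX : a ≤ X := (Finset.mem_Icc.mp (Finset.mem_product.mp hmem).1).2
        have hbX : b ≤ X := (Finset.mem_Icc.mp (Finset.mem_product.mp hmem).2).2
        have hda : d ∣ m a := hgcd ▸ Nat.gcd_dvd_left _ _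
        have hdb : d ∣ m b := hgcd ▸ Nat.gcd_dvd_right _ _
        exact Finset.mem_product.mpr ⟨hmemU d a hd2 haP haX hda, hmemU d b hd2 hbP hbX hdb⟩
      have hSnn : (0:ℝ) ≤ ∑ n ∈ U d, (n:ℝ)⁻¹ := Finset.sum_nonneg fun n _ => by positivity
      have hUle : ∑ n ∈ U d, (n:ℝ)⁻¹ ≤ 3 * (d:ℝ)⁻¹ * (1 + Real.log X) :=
        aux_sum_U_le X d hd2 hX1
      have hUle2 : ∑ n ∈ U d, (n:ℝ)⁻¹ ≤ 3 * (d:ℝ)⁻¹ * (1 + Real.log x) := by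
        have hdinv : (0:ℝ) ≤ (d:ℝ)⁻¹ := by positivity
        nlinarith [hXlog]
      calc ∑ q ∈ P.filter (fun q => Nat.gcd (m q.1) (m q.2) = d), ((q.1:ℝ)⁻¹ * (q.2:ℝ)⁻¹)
          ≤ ∑ q ∈ U d ×ˢ U d, ((q.1:ℝ)⁻¹ * (q.2:ℝ)⁻¹) :=
            Finset.sum_le_sum_of_subset_of_nonneg hsubUU (fun q _ _ => by positivity)
        _ = (∑ n ∈ U d, (n:ℝ)⁻¹) * (∑ n ∈ U d, (n:ℝ)⁻¹) := by
            rw [Finset.sum_product]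
            exact (Finset.sum_mul_sum (U d) (U d)
              (fun n : ℕ => (n:ℝ)⁻¹) (fun n : ℕ => (n:ℝ)⁻¹)).symm
        _ ≤ (3 * (d:ℝ)⁻¹ * (1 + Real.log x)) ^ 2 := by
            rw [pow_two]
            exact mul_le_mul hUle2 hUle2 hSnn (by positivity)
    have hfinal2 : ∑ q ∈ P, ((q.1:ℝ)⁻¹ * (q.2:ℝ)⁻¹)
        ≤ 9 * (1 + Real.log x) ^ 2 * (G:ℝ)⁻¹ := by
      rw [hsplit]
      calc ∑ d ∈ Icc (G + 1) (X + 1), ∑ q ∈ P.filter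
              (fun q => Nat.gcd (m q.1) (m q.2) = d), ((q.1:ℝ)⁻¹ * (q.2:ℝ)⁻¹)
          ≤ ∑ d ∈ Icc (G + 1) (X + 1), (3 * (d:ℝ)⁻¹ * (1 + Real.log x)) ^ 2 :=
            Finset.sum_le_sum hinner
        _ = 9 * (1 + Real.log x) ^ 2 * ∑ d ∈ Icc (G + 1) (X + 1), ((d:ℝ) * d)⁻¹ := by
            rw [Finset.mul_sum]
            refine Finset.sum_congr rfl fun d hd => ?_
            rw [mul_inv]
            ring
        _ ≤ 9 * (1 + Real.log x) ^ 2 * (G:ℝ)⁻¹ := by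
            refine mul_le_mul_of_nonneg_left (aux_sum_inv_sq_le G (X + 1) hG1) (by positivity)
    have hrealB2 : (B2.card : ℝ) ≤ x * (9 * (1 + Real.log x) ^ 2 * (G:ℝ)⁻¹) := by
      calc (B2.card : ℝ) ≤ ((∑ q ∈ P, X / (q.1 * q.2) : ℕ) : ℝ) := Nat.cast_le.mpr hcard2
        _ = ∑ q ∈ P, ((X / (q.1 * q.2) : ℕ) : ℝ) := by push_cast; rfl
        _ ≤ ∑ q ∈ P, x * ((q.1:ℝ)⁻¹ * (q.2:ℝ)⁻¹) := by
            refine Finset.sum_le_sum fun q hq => ?_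
            obtain ⟨hmem, hq1P, hq2P, -, -⟩ := Finset.mem_filter.mp hq
            have hh1 : (0:ℝ) < q.1 := by exact_mod_cast hq1P.pos
            have hh2 : (0:ℝ) < q.2 := by exact_mod_cast hq2P.pos
            calc ((X / (q.1 * q.2) : ℕ) : ℝ) ≤ (X:ℝ) / ((q.1 : ℝ) * q.2) := by
                  have hcd := Nat.cast_div_le (α := ℝ) (m := X) (n := q.1 * q.2)
                  push_cast at hcd
                  exact hcd
              _ ≤ x / ((q.1 : ℝ) * q.2) :=
                  div_le_div_of_nonneg_right hXx (by positivity) |>.trans_eq rfl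
              _ = x * ((q.1:ℝ)⁻¹ * (q.2:ℝ)⁻¹) := by rw [div_eq_mul_inv, mul_inv]
        _ = x * ∑ q ∈ P, ((q.1:ℝ)⁻¹ * (q.2:ℝ)⁻¹) := by rw [Finset.mul_sum]
        _ ≤ x * (9 * (1 + Real.log x) ^ 2 * (G:ℝ)⁻¹) :=
            mul_le_mul_of_nonneg_left hfinal2 hx0
    have hGbig : 18 / ε * (1 + Real.log x) ^ 2 ≤ (G:ℝ) := le_trans h4 (le_of_lt hGgt)
    have hGpos : (0:ℝ) < G := by
      have : (0:ℝ) < 18 / ε * (1 + Real.log x) ^ 2 := by positivity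
      linarith
    have hstep : 9 * (1 + Real.log x) ^ 2 * (G:ℝ)⁻¹ ≤ ε / 2 := by
      have h9 : 9 * (1 + Real.log x) ^ 2 ≤ ε / 2 * (G:ℝ) := by
        have hmul := mul_le_mul_of_nonneg_left hGbig (by positivity : (0:ℝ) ≤ ε / 2)
        have heq : ε / 2 * (18 / ε * (1 + Real.log x) ^ 2) = 9 * (1 + Real.log x) ^ 2 := by
          field_simp
          ring
        linarith [heq ▸ hmul]
      rw [← div_eq_mul_inv, div_le_iff₀ hGpos]
      linarith
    calc (B2.card : ℝ) ≤ x * (9 * (1 + Real.log x) ^ 2 * (G:ℝ)⁻¹) := hrealB2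
      _ ≤ x * (ε / 2) := mul_le_mul_of_nonneg_left hstep hx0
      _ = ε / 2 * x := by ring
  calc (badF.card : ℝ) ≤ (B1.card : ℝ) + (B2.card : ℝ) := hcard
    _ ≤ ε / 2 * x + ε / 2 * x := add_le_add hB1count hB2count
    _ = ε * x := by ring
end

section
/- There is a constant C > 0 (depending on A) such that for every y ≥ 1, the number of primes p with ord(A,p) ≤ y is at most C·y². -/
/-!
If `p` is prime and `k = ord(A,p)`, then `A^k ≡ I (mod p)` gives `p ∣ tr(A^k) - 2`. By
Cayley–Hamilton the traces `t_k = tr(A^k)` satisfy `t_{k+2} = t₁ t_{k+1} - t_k`, and since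
`|t₁| > 2` the sequence `|t_k|` grows strictly but at most exponentially. Hence
`tr(A^k) - 2` is a nonzero integer of size at most `2^{ck}`, which has at most `ck` prime
factors: at most `ck` primes have order `k`, and summing over `k ≤ y` gives `O(y²)`.
-/

open Matrix

namespace Matrix

variable {R : Type*} [CommRing R]

theorem sq_eq_trace_smul_sub_det_smul (A : Matrix (Fin 2) (Fin 2) R) :
    A ^ 2 = A.trace • A - A.det • (1 : Matrix (Fin 2) (Fin 2) R) := by
  ext i j
  fin_cases i <;> fin_cases j <;>
    simp [sq, mul_apply, Fin.sum_univ_two, trace_fin_two, det_fin_two] <;> ring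

theorem trace_pow_add_two (A : Matrix (Fin 2) (Fin 2) R) (hA : A.det = 1) (k : ℕ) :
    (A ^ (k + 2)).trace = A.trace * (A ^ (k + 1)).trace - (A ^ k).trace := by
  have : A ^ (k + 2) = A.trace • A ^ (k + 1) - A ^ k := by
    rw [pow_add, sq_eq_trace_smul_sub_det_smul, hA, one_smul, mul_sub, mul_one, Matrix.mul_smul,
      ← pow_succ]
  rw [this, trace_sub, trace_smul, smul_eq_mul]

end Matrix

section Recurrence

variable {R : Type*} [CommRing R] [LinearOrder R] [IsStrictOrderedRing R] {u : ℕ → R} {t : R}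

theorem abs_lt_abs_succ_of_recurrence (ht : 2 ≤ |t|)
    (hrec : ∀ k, u (k + 2) = t * u (k + 1) - u k) (h0 : |u 0| < |u 1|) (k : ℕ) :
    |u k| < |u (k + 1)| := by
  induction k with
  | zero => exact h0
  | succ k ih =>
    show |u (k + 1)| < |u (k + 2)|
    have : |t| * |u (k + 1)| - |u k| ≤ |u (k + 2)| := by
      rw [hrec, ← abs_mul]; exact abs_sub_abs_le_abs_sub _ _
    nlinarith [mul_le_mul_of_nonneg_right ht (abs_nonneg (u (k + 1))), abs_nonneg (u k)]

theorem abs_le_pow_mul_of_recurrence (ht : 2 ≤ |t|)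
    (hrec : ∀ k, u (k + 2) = t * u (k + 1) - u k) (h0 : |u 0| < |u 1|)
    (h1 : |u 1| ≤ (|t| + 1) * |u 0|) (k : ℕ) : |u k| ≤ (|t| + 1) ^ k * |u 0| := by
  have hstep : ∀ k, |u (k + 1)| ≤ (|t| + 1) * |u k|
    | 0 => h1
    | k + 1 => calc
      |u (k + 2)| ≤ |t| * |u (k + 1)| + |u k| := by
        rw [hrec, ← abs_mul]; exact abs_sub _ _
      _ ≤ (|t| + 1) * |u (k + 1)| := by
        linarith [abs_lt_abs_succ_of_recurrence ht hrec h0 k]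
  induction k with
  | zero => simp
  | succ k ih => calc
    |u (k + 1)| ≤ (|t| + 1) * ((|t| + 1) ^ k * |u 0|) :=
      (hstep k).trans (mul_le_mul_of_nonneg_left ih (by positivity))
    _ = (|t| + 1) ^ (k + 1) * |u 0| := by ring

end Recurrence

theorem Nat.card_primeFactors_le_log (n : ℕ) : n.primeFactors.card ≤ Nat.log 2 n := by
  rcases eq_or_ne n 0 with rfl | hn
  · simp
  refine Nat.le_log_of_pow_le one_lt_two ?_
  calc 2 ^ n.primeFactors.card ≤ ∏ p ∈ n.primeFactors, p :=
        Finset.pow_card_le_prod _ _ _ fun p hp => (Nat.prime_of_mem_primeFactors hp).two_le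
    _ ≤ n := Nat.le_of_dvd (Nat.pos_of_ne_zero hn) (Nat.prod_primeFactors_dvd n)

theorem Matrix.exists_pow_dvd_sub_one {n : Type*} [Fintype n] [DecidableEq n]
    {A : Matrix n n ℤ} (hA : IsUnit A.det) {N : ℕ} (hN : N ≠ 0) :
    ∃ k, 0 < k ∧ ∀ i j, (N : ℤ) ∣ (A ^ k - 1) i j := by
  have : NeZero N := ⟨hN⟩
  set f := (Int.castRingHom (ZMod N)).mapMatrix (m := n)
  obtain ⟨u, hu⟩ : IsUnit (f A) :=
    (f A).isUnit_iff_isUnit_det.mpr (RingHom.map_det (Int.castRingHom (ZMod N)) A ▸ hA.map _)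
  refine ⟨orderOf u, orderOf_pos u, fun i j => ?_⟩
  have : f (A ^ orderOf u - 1) = 0 := by
    rw [map_sub, map_pow, map_one, ← hu, ← Units.val_pow_eq_pow_val, pow_orderOf_eq_one,
      Units.val_one, sub_self]
  rw [← ZMod.intCast_zmod_eq_zero_iff_dvd]
  simpa [f] using congrFun (congrFun this i) j

section OrderModPrime

variable {A : Matrix (Fin 2) (Fin 2) ℤ}

theorem matOrd_spec (hA : IsUnit A.det) {N : ℕ} (hN : N ≠ 0) :
    0 < matOrd A N ∧ ∀ i j, (N : ℤ) ∣ (A ^ matOrd A N - 1) i j :=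
  Nat.sInf_mem (A.exists_pow_dvd_sub_one hA hN)

theorem dvd_trace_pow_matOrd_sub_two (hA : IsUnit A.det) {N : ℕ} (hN : N ≠ 0) :
    (N : ℤ) ∣ (A ^ matOrd A N).trace - 2 := by
  have htrace : (A ^ matOrd A N - 1).trace = (A ^ matOrd A N).trace - 2 := by
    simp [trace_sub]
  rw [← htrace]
  exact Finset.dvd_sum fun i _ => (matOrd_spec hA hN).2 i i

theorem two_lt_abs_trace_pow (hA : A.det = 1) (htr : 2 < |A.trace|) {k : ℕ} (hk : 0 < k) :
    2 < |(A ^ k).trace| := by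
  have hmono : StrictMono fun k => |(A ^ k).trace| :=
    strictMono_nat_of_lt_succ <|
      abs_lt_abs_succ_of_recurrence htr.le (trace_pow_add_two A hA) (by simpa using htr)
  simpa using hmono hk

theorem natAbs_trace_pow_sub_two_le (hA : A.det = 1) (htr : 2 < |A.trace|) {k : ℕ}
    (hk : 0 < k) : ((A ^ k).trace - 2).natAbs ≤ 2 ^ ((A.trace.natAbs + 2) * k) := by
  have hgrowth : |(A ^ k).trace| ≤ (|A.trace| + 1) ^ k * 2 := by
    simpa using abs_le_pow_mul_of_recurrence (u := fun k => (A ^ k).trace) htr.le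
      (trace_pow_add_two A hA) (by simpa using htr) (by
        simp only [pow_one, pow_zero, trace_one, Fintype.card_fin, Nat.cast_ofNat, abs_two]
        linarith) k
  have hbase : 4 * (|A.trace| + 1) ≤ 2 ^ (A.trace.natAbs + 2) := by
    have : (A.trace.natAbs : ℤ) + 1 ≤ 2 ^ A.trace.natAbs := by
      exact_mod_cast Nat.lt_two_pow_self
    rw [← Int.natCast_natAbs, pow_add]
    linarith
  zify
  calc |(A ^ k).trace - 2| ≤ |(A ^ k).trace| + 2 := by simpa using abs_sub (A ^ k).trace 2
    _ ≤ 4 * (|A.trace| + 1) ^ k := by linarith [two_lt_abs_trace_pow hA htr hk]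
    _ ≤ 4 ^ k * (|A.trace| + 1) ^ k := by
        gcongr; exact le_self_pow₀ (by norm_num) hk.ne'
    _ ≤ 2 ^ ((A.trace.natAbs + 2) * k) := by
        rw [← mul_pow, pow_mul]
        exact pow_le_pow_left₀ (by positivity) hbase k

theorem setOf_prime_matOrd_le_subset (hA : A.det = 1) (htr : 2 < |A.trace|) (K : ℕ) :
    {p : ℕ | p.Prime ∧ matOrd A p ≤ K} ⊆
      ↑((Finset.Icc 1 K).biUnion fun k => ((A ^ k).trace - 2).natAbs.primeFactors) := by
  rintro p ⟨hp, hpK⟩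
  have hunit : IsUnit A.det := hA ▸ isUnit_one
  have hpos := (matOrd_spec hunit hp.ne_zero).1
  rw [Finset.mem_coe, Finset.mem_biUnion]
  refine ⟨matOrd A p, Finset.mem_Icc.mpr ⟨hpos, hpK⟩, Nat.mem_primeFactors.mpr ⟨hp, ?_, ?_⟩⟩
  · exact Int.natCast_dvd.mp (dvd_trace_pow_matOrd_sub_two hunit hp.ne_zero)
  · rw [Int.natAbs_ne_zero, sub_ne_zero]
    exact fun h => by simpa [h] using two_lt_abs_trace_pow hA htr hpos

theorem ncard_setOf_prime_matOrd_le (hA : A.det = 1) (htr : 2 < |A.trace|) (K : ℕ) :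
    {p : ℕ | p.Prime ∧ matOrd A p ≤ K}.Finite ∧
      {p : ℕ | p.Prime ∧ matOrd A p ≤ K}.ncard ≤ (A.trace.natAbs + 2) * K ^ 2 := by
  have hsub := setOf_prime_matOrd_le_subset hA htr K
  refine ⟨(Finset.finite_toSet _).subset hsub, ?_⟩
  calc _ ≤ ((Finset.Icc 1 K).biUnion fun k => ((A ^ k).trace - 2).natAbs.primeFactors).card :=
        (Set.ncard_le_ncard hsub (Finset.finite_toSet _)).trans_eq (Set.ncard_coe_finset _)
    _ ≤ ∑ k ∈ Finset.Icc 1 K, ((A ^ k).trace - 2).natAbs.primeFactors.card :=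
        Finset.card_biUnion_le
    _ ≤ ∑ _k ∈ Finset.Icc 1 K, (A.trace.natAbs + 2) * K := by
        refine Finset.sum_le_sum fun k hk => ?_
        obtain ⟨hk1, hkK⟩ := Finset.mem_Icc.mp hk
        calc _ ≤ Nat.log 2 ((A ^ k).trace - 2).natAbs := Nat.card_primeFactors_le_log _
          _ ≤ Nat.log 2 (2 ^ ((A.trace.natAbs + 2) * k)) :=
            Nat.log_mono_right (natAbs_trace_pow_sub_two_le hA htr hk1)
          _ ≤ (A.trace.natAbs + 2) * K := by
            rw [Nat.log_pow one_lt_two]; gcongr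
    _ = (A.trace.natAbs + 2) * K ^ 2 := by
        rw [Finset.sum_const, Nat.card_Icc, Nat.add_sub_cancel, smul_eq_mul]; ring

end OrderModPrime

/-- The number of primes `p` with `ord(A,p) ≤ y` is `O(y²)`. -/
theorem few_primes_with_small_order
    (A : Matrix (Fin 2) (Fin 2) ℤ) (hA : A.det = 1) (htr : 2 < |A.trace|) :
    ∃ C : ℝ, 0 < C ∧ ∀ y : ℝ, 1 ≤ y →
      {p : ℕ | p.Prime ∧ (matOrd A p : ℝ) ≤ y}.Finite ∧
      ({p : ℕ | p.Prime ∧ (matOrd A p : ℝ) ≤ y}.ncard : ℝ) ≤ C * y ^ 2 := by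
  refine ⟨A.trace.natAbs + 2, by positivity, fun y hy => ?_⟩
  have hy0 : (0 : ℝ) ≤ y := by linarith
  have hset : {p : ℕ | p.Prime ∧ (matOrd A p : ℝ) ≤ y} =
      {p : ℕ | p.Prime ∧ matOrd A p ≤ ⌊y⌋₊} := by
    simp only [Nat.le_floor_iff hy0]
  obtain ⟨hfin, hcard⟩ := ncard_setOf_prime_matOrd_le hA htr ⌊y⌋₊
  rw [hset]
  refine ⟨hfin, ?_⟩
  calc _ ≤ (((A.trace.natAbs + 2) * ⌊y⌋₊ ^ 2 : ℕ) : ℝ) := by exact_mod_cast hcard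
    _ ≤ (A.trace.natAbs + 2) * y ^ 2 := by
        push_cast; gcongr; exact Nat.floor_le hy0
end
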